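/- arXiv:1710.04077 — 11 statements merged into one kernel-verified Lean document; each statement's English description precedes it below -/
import Mathlib

section
/- Let S ⊆ ℤ^{n+m} be an integrally convex set and let T = { x ∈ ℤ^n : ∃ y ∈ ℤ^m, (x,y) ∈ S } be its projection to ℤ^n. Then T is an integrally convex set. -/
open scoped BigOperators

noncomputable section

variable {ι : Type*} [Fintype ι]

/-- Embedding of integer vectors into real vectors. -/
def embedZ (z : ι → ℤ) : ι → ℝ := fun i => (z i : ℝ)

/-- The integral neighborhood `N(x)` of a real vector `x`. -/
def IntNbhd (x : ι → ℝ) : Set (ι → ℤ) := {z | ∀ i, |x i - (z i : ℝ)| < 1}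

/-- A set `S ⊆ ℤ^ι` is integrally convex if every point `x` of its convex hull
belongs to the convex hull of `S ∩ N(x)`. -/
def IntegrallyConvexSet (S : Set (ι → ℤ)) : Prop :=
  ∀ x ∈ convexHull ℝ (embedZ '' S), x ∈ convexHull ℝ (embedZ '' (S ∩ IntNbhd x))

/-- The local convex extension `f̃` of `f : ℤ^ι → ℝ ∪ {+∞}`. -/
def LocalConvexExt (f : (ι → ℤ) → EReal) (x : ι → ℝ) : EReal :=
  sInf {v : EReal | ∃ (A : Finset (ι → ℤ)) (lam : (ι → ℤ) → ℝ),
    (∀ z ∈ A, z ∈ IntNbhd x) ∧ (∀ z ∈ A, 0 ≤ lam z) ∧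
    (∑ z ∈ A, lam z) = 1 ∧ (∀ i, (∑ z ∈ A, lam z * (z i : ℝ)) = x i) ∧
    v = ∑ z ∈ A, ((lam z : EReal) * f z)}

/-- A function `f : ℤ^ι → ℝ ∪ {+∞}` is integrally convex if its local convex
extension is a convex function on `ℝ^ι`. -/
def IntegrallyConvexFn (f : (ι → ℤ) → EReal) : Prop :=
  ∀ x y : ι → ℝ, ∀ a b : ℝ, 0 ≤ a → 0 ≤ b → a + b = 1 →
    LocalConvexExt f (a • x + b • y) ≤
      (a : EReal) * LocalConvexExt f x + (b : EReal) * LocalConvexExt f y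

/-- Componentwise rounded-up midpoint `⌈(x+y)/2⌉` of two integer vectors. -/
def midUp (x y : ι → ℤ) : ι → ℤ := fun i => ⌈((x i + y i : ℤ) : ℚ) / 2⌉

/-- Componentwise rounded-down midpoint `⌊(x+y)/2⌋` of two integer vectors. -/
def midDown (x y : ι → ℤ) : ι → ℤ := fun i => ⌊((x i + y i : ℤ) : ℚ) / 2⌋

/-- A set `S ⊆ ℤ^ι` is discrete midpoint convex if for all `x, y ∈ S` with
`‖x - y‖∞ ≥ 2`, both `⌈(x+y)/2⌉` and `⌊(x+y)/2⌋` belong to `S`. -/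
def DiscreteMidpointConvexSet (S : Set (ι → ℤ)) : Prop :=
  ∀ x ∈ S, ∀ y ∈ S, (∃ i, 2 ≤ |x i - y i|) → midUp x y ∈ S ∧ midDown x y ∈ S

/-- Globally discrete midpoint convex function: discrete midpoint convexity for
all pairs with `‖x - y‖∞ ≥ 2`. -/
def GloballyDMC (f : (ι → ℤ) → EReal) : Prop :=
  ∀ x y : ι → ℤ, (∃ i, 2 ≤ |x i - y i|) →
    f (midUp x y) + f (midDown x y) ≤ f x + f y

/-- Locally discrete midpoint convex function: effective domain is a discrete
midpoint convex set, and discrete midpoint convexity holds whenever `‖x - y‖∞ = 2`. -/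
def LocallyDMC (f : (ι → ℤ) → EReal) : Prop :=
  DiscreteMidpointConvexSet {x | f x ≠ ⊤} ∧
  ∀ x y : ι → ℤ, (∀ i, |x i - y i| ≤ 2) → (∃ i, |x i - y i| = 2) →
    f (midUp x y) + f (midDown x y) ≤ f x + f y

/-- An integer interval (box) `B = [a, b] ∩ ℤ^ι` with bounds
`a ∈ (ℤ ∪ {-∞})^ι`, `b ∈ (ℤ ∪ {+∞})^ι`, `a ≤ b`. -/
def IsIntegerInterval (B : Set (ι → ℤ)) : Prop :=
  ∃ a b : ι → EReal,
    (∀ i, a i = ⊥ ∨ ∃ k : ℤ, a i = ((k : ℝ) : EReal)) ∧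
    (∀ i, b i = ⊤ ∨ ∃ k : ℤ, b i = ((k : ℝ) : EReal)) ∧
    (∀ i, a i ≤ b i) ∧
    B = {x | ∀ i, a i ≤ ((x i : ℝ) : EReal) ∧ ((x i : ℝ) : EReal) ≤ b i}

/-- Separable convex function: a sum of univariate discrete convex functions. -/
def SeparableConvex (φ : (ι → ℤ) → EReal) : Prop :=
  ∃ φi : ι → ℤ → EReal,
    (∀ i t, φi i t ≠ ⊥) ∧
    (∀ i t, 2 * φi i t ≤ φi i (t - 1) + φi i (t + 1)) ∧
    (∀ x, φ x = ∑ i, φi i (x i))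

/-- The projection of an integrally convex set is integrally convex. -/
theorem projection_of_integrally_convex_set (n m : ℕ)
    (S : Set ((Fin n ⊕ Fin m) → ℤ)) (hS : IntegrallyConvexSet S) :
    IntegrallyConvexSet {x : Fin n → ℤ | ∃ y : Fin m → ℤ, Sum.elim x y ∈ S} := by
  intro x hx
  set π : ((Fin n ⊕ Fin m) → ℝ) →ₗ[ℝ] (Fin n → ℝ) := LinearMap.funLeft ℝ ℝ Sum.inl with hπ
  have himg : embedZ '' {x : Fin n → ℤ | ∃ y : Fin m → ℤ, Sum.elim x y ∈ S}
      = π '' (embedZ '' S) := by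
    ext u
    constructor
    · rintro ⟨z, ⟨y, hzy⟩, rfl⟩
      exact ⟨embedZ (Sum.elim z y), ⟨_, hzy, rfl⟩, rfl⟩
    · rintro ⟨_, ⟨p, hp, rfl⟩, rfl⟩
      refine ⟨p ∘ Sum.inl, ⟨p ∘ Sum.inr, ?_⟩, rfl⟩
      have : Sum.elim (p ∘ Sum.inl) (p ∘ Sum.inr) = p := by
        funext j; cases j <;> rfl
      rwa [this]
  rw [himg, ← LinearMap.image_convexHull] at hx
  obtain ⟨w, hw, rfl⟩ := hx
  have hw2 := hS w hw
  have hsub : π '' (embedZ '' (S ∩ IntNbhd w)) ⊆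
      embedZ '' ({x : Fin n → ℤ | ∃ y : Fin m → ℤ, Sum.elim x y ∈ S} ∩ IntNbhd (π w)) := by
    rintro _ ⟨_, ⟨p, ⟨hpS, hpN⟩, rfl⟩, rfl⟩
    refine ⟨p ∘ Sum.inl, ⟨⟨p ∘ Sum.inr, ?_⟩, fun i => hpN (Sum.inl i)⟩, rfl⟩
    have : Sum.elim (p ∘ Sum.inl) (p ∘ Sum.inr) = p := by
      funext j; cases j <;> rfl
    rwa [this]
  have : π w ∈ convexHull ℝ (π '' (embedZ '' (S ∩ IntNbhd w))) := by
    rw [← LinearMap.image_convexHull]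
    exact ⟨w, hw2, rfl⟩
  exact convexHull_mono hsub this
end
end

section
/- Let f : ℤ^{n+m} → ℝ ∪ {+∞} be an integrally convex function and define g : ℤ^n → ℝ ∪ {+∞} by g(x) = inf { f(x,y) : y ∈ ℤ^m }. If g(x) > −∞ for every x ∈ ℤ^n, then g is an integrally convex function. -/
/-! The local convex extension of the projection `g` is the infimal projection of that of `f`:
`g̃ x = ⨅ y, f̃ (x, y)`. For `≤`, a representation of `(x, y)` by points of `N(x, y)` pushes
forward to one of `x` by points of `N(x)`. For `≥`, a representation `x = ∑ λ_z z` together with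
nearly optimal fibres `y_z` gives the point `∑ λ_z (z, y_z)`, at which Jensen's inequality for the
convex `f̃` bounds `f̃` by `∑ λ_z f (z, y_z)`. Finally, the infimal projection of a jointly convex
function is convex as long as it never takes the value `⊥`. -/

open scoped BigOperators

noncomputable section

variable {ι : Type*} [Fintype ι]

open Finset

namespace EReal

variable {α β : Type*}

lemma coe_mul_sum_of_nonneg {c : ℝ} (hc : 0 ≤ c) (A : Finset α) (t : α → EReal) :
    (c : EReal) * ∑ a ∈ A, t a = ∑ a ∈ A, (c : EReal) * t a := by
  classical
  induction A using Finset.induction_on with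
  | empty => simp
  | insert a A ha ih =>
    rw [sum_insert ha, sum_insert ha,
      left_distrib_of_nonneg_of_ne_top (EReal.coe_nonneg.2 hc) (coe_ne_top c), ih]

lemma sum_coe_mul_of_nonneg {A : Finset α} {w : α → ℝ} (hw : ∀ a ∈ A, 0 ≤ w a) (c : EReal) :
    ∑ a ∈ A, (w a : EReal) * c = ((∑ a ∈ A, w a : ℝ) : EReal) * c := by
  classical
  induction A using Finset.induction_on with
  | empty => simp
  | insert a A ha ih =>
    have hA : ∀ b ∈ A, 0 ≤ w b := fun b hb => hw b (mem_insert_of_mem hb)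
    rw [sum_insert ha, sum_insert ha, coe_add, ih hA,
      right_distrib_of_nonneg (EReal.coe_nonneg.2 (hw a (mem_insert_self a A)))
        (EReal.coe_nonneg.2 (sum_nonneg hA))]

lemma coe_mul_iInf_of_nonneg [Nonempty β] {c : ℝ} (hc : 0 ≤ c) (u : β → EReal) :
    (c : EReal) * ⨅ b, u b = ⨅ b, (c : EReal) * u b := by
  rcases hc.eq_or_lt with rfl | hc
  · simp
  have hc' : (0 : EReal) < c := EReal.coe_pos.2 hc
  refine le_antisymm (le_iInf fun b => mul_le_mul_of_nonneg_left (iInf_le u b) hc'.le) ?_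
  rw [← div_le_iff_le_mul hc' (coe_ne_top c)]
  exact le_iInf fun b => (div_le_iff_le_mul hc' (coe_ne_top c)).2 (iInf_le _ b)

lemma exists_sum_lt_of_sum_iInf_lt [Nonempty β] {A : Finset α} {u : α → β → EReal}
    (hu : ∀ a ∈ A, ⨅ b, u a b ≠ ⊥) {r : EReal} (h : ∑ a ∈ A, ⨅ b, u a b < r) :
    ∃ W : α → β, ∑ a ∈ A, u a (W a) < r := by
  classical
  induction A using Finset.induction_on generalizing r with
  | empty => exact ⟨fun _ => Classical.arbitrary β, h⟩
  | insert a A ha ih =>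
    have hA : ∀ a' ∈ A, ⨅ b, u a' b ≠ ⊥ := fun a' h' => hu a' (mem_insert_of_mem h')
    have hS : ∑ a' ∈ A, ⨅ b, u a' b ≠ ⊥ :=
      sum_induction _ (· ≠ ⊥) (fun _ _ hx hy => add_ne_bot_iff.2 ⟨hx, hy⟩) zero_ne_bot hA
    have ha' := hu a (mem_insert_self a A)
    rw [sum_insert ha] at h
    obtain ⟨b, hb⟩ := iInf_lt_iff.1 ((EReal.lt_sub_iff_add_lt (.inl hS) (.inr ha')).2 h)
    have hb' : u a b ≠ ⊥ := ne_bot_of_le_ne_bot ha' (iInf_le _ b)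
    have hSb : ∑ a' ∈ A, ⨅ b, u a' b < r - u a b :=
      (EReal.lt_sub_iff_add_lt (.inl hb') (.inr hS)).2 (by rw [add_comm]; exact add_lt_of_lt_sub hb)
    obtain ⟨W, hW⟩ := ih hA hSb
    refine ⟨Function.update W a b, ?_⟩
    rw [sum_insert ha, Function.update_self, add_comm,
      sum_congr rfl fun a' h' => by rw [Function.update_of_ne (ne_of_mem_of_not_mem h' ha)]]
    exact add_lt_of_lt_sub hW

end EReal

/-- Convexity of an extended-real-valued function, in the form of `IntegrallyConvexFn`:
`EReal` is not an `ℝ`-module, so `ConvexOn` does not apply. -/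
def ERealConvex {E : Type*} [AddCommMonoid E] [Module ℝ E] (φ : E → EReal) : Prop :=
  ∀ x y : E, ∀ a b : ℝ, 0 ≤ a → 0 ≤ b → a + b = 1 →
    φ (a • x + b • y) ≤ (a : EReal) * φ x + (b : EReal) * φ y

namespace ERealConvex

variable {E F : Type*} [AddCommMonoid E] [Module ℝ E] [AddCommMonoid F] [Module ℝ F]

theorem map_sum_le {φ : E → EReal} (hφ : ERealConvex φ) {α : Type*} {A : Finset α}
    {w : α → ℝ} {P : α → E} (hw0 : ∀ a ∈ A, 0 ≤ w a) (hw1 : ∑ a ∈ A, w a = 1) :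
    φ (∑ a ∈ A, w a • P a) ≤ ∑ a ∈ A, (w a : EReal) * φ (P a) := by
  classical
  induction A using Finset.induction_on generalizing w with
  | empty => simp at hw1
  | insert a A ha ih =>
    rw [sum_insert ha] at hw1
    rw [sum_insert ha, sum_insert ha]
    have hA0 : ∀ a' ∈ A, 0 ≤ w a' := fun a' h => hw0 a' (mem_insert_of_mem h)
    set t := ∑ a' ∈ A, w a'
    rcases (sum_nonneg hA0).eq_or_lt with ht | ht
    · have hzero : ∀ a' ∈ A, w a' = 0 := (sum_eq_zero_iff_of_nonneg hA0).1 ht.symm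
      have hwa : w a = 1 := by linarith
      rw [hwa, sum_eq_zero fun a' h => by rw [hzero a' h, zero_smul],
        sum_eq_zero fun a' h => by rw [hzero a' h, EReal.coe_zero, zero_mul]]
      simp
    · set w' := fun a' => w a' / t
      have hsplit : ∑ a' ∈ A, w a' • P a' = t • ∑ a' ∈ A, w' a' • P a' := by
        rw [smul_sum]
        exact sum_congr rfl fun a' _ => by rw [smul_smul, mul_div_cancel₀ _ ht.ne']
      have ih' : φ (∑ a' ∈ A, w' a' • P a') ≤ ∑ a' ∈ A, (w' a' : EReal) * φ (P a') :=
        ih (fun a' h => div_nonneg (hA0 a' h) ht.le) (by rw [← sum_div, div_self ht.ne'])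
      calc φ (w a • P a + ∑ a' ∈ A, w a' • P a')
          ≤ w a * φ (P a) + t * φ (∑ a' ∈ A, w' a' • P a') := by
            rw [hsplit]; exact hφ _ _ _ _ (hw0 a (mem_insert_self a A)) ht.le hw1
        _ ≤ w a * φ (P a) + t * ∑ a' ∈ A, (w' a' : EReal) * φ (P a') := by
            gcongr
        _ = w a * φ (P a) + ∑ a' ∈ A, (w a' : EReal) * φ (P a') := by
            rw [EReal.coe_mul_sum_of_nonneg ht.le]
            congr 1
            exact sum_congr rfl fun a' _ => by
              rw [← mul_assoc, ← EReal.coe_mul, mul_div_cancel₀ _ ht.ne']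

theorem comp_linearMap {φ : F → EReal} (hφ : ERealConvex φ) (L : E →ₗ[ℝ] F) :
    ERealConvex (φ ∘ L) := fun x y a b ha hb hab => by
  simpa only [Function.comp_apply, map_add, map_smul] using hφ (L x) (L y) a b ha hb hab

theorem of_lt {φ : E → EReal} (hbot : ∀ x, φ x ≠ ⊥)
    (h : ∀ x y : E, ∀ a b : ℝ, 0 < a → 0 < b → a + b = 1 → ∀ r s : ℝ,
      φ x < r → φ y < s → φ (a • x + b • y) ≤ ((a * r + b * s : ℝ) : EReal)) :
    ERealConvex φ := by
  intro x y a b ha hb hab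
  rcases ha.eq_or_lt with rfl | ha
  · simp [show b = 1 by linarith]
  rcases hb.eq_or_lt with rfl | hb
  · simp [show a = 1 by linarith]
  have ha' : (0 : EReal) < a := EReal.coe_pos.2 ha
  have hb' : (0 : EReal) < b := EReal.coe_pos.2 hb
  rcases eq_or_ne (φ x) ⊤ with hx | hx
  · rw [hx, EReal.mul_top_of_pos ha', EReal.top_add_of_ne_bot]
    · exact le_top
    · exact (EReal.mul_ne_bot _ _).2 ⟨.inl (EReal.coe_ne_bot b), .inr (hbot y),
        .inl (EReal.coe_ne_top b), .inl hb'.le⟩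
  rcases eq_or_ne (φ y) ⊤ with hy | hy
  · rw [hy, EReal.mul_top_of_pos hb', EReal.add_top_of_ne_bot]
    · exact le_top
    · exact (EReal.mul_ne_bot _ _).2 ⟨.inl (EReal.coe_ne_bot a), .inr (hbot x),
        .inl (EReal.coe_ne_top a), .inl ha'.le⟩
  obtain ⟨p, hp⟩ : ∃ p : ℝ, φ x = p := ⟨_, (EReal.coe_toReal hx (hbot x)).symm⟩
  obtain ⟨q, hq⟩ : ∃ q : ℝ, φ y = q := ⟨_, (EReal.coe_toReal hy (hbot y)).symm⟩
  rw [hp, hq, ← EReal.coe_mul, ← EReal.coe_mul, ← EReal.coe_add]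
  refine EReal.le_of_forall_lt_iff_le.1 fun t ht => ?_
  have hδ : 0 < t - (a * p + b * q) := sub_pos.2 (EReal.coe_lt_coe_iff.1 ht)
  convert h x y a b ha hb hab (p + (t - (a * p + b * q))) (q + (t - (a * p + b * q)))
    (by rw [hp]; exact_mod_cast lt_add_of_pos_right p hδ)
    (by rw [hq]; exact_mod_cast lt_add_of_pos_right q hδ) using 2
  linear_combination (a * p + b * q - t) * hab

theorem iInf_snd {Φ : E × F → EReal} (hΦ : ERealConvex Φ) (hbot : ∀ x, ⨅ y, Φ (x, y) ≠ ⊥) :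
    ERealConvex fun x => ⨅ y, Φ (x, y) := by
  refine of_lt hbot fun x x' a b ha hb hab r s hr hs => ?_
  obtain ⟨y, hy⟩ := iInf_lt_iff.1 hr
  obtain ⟨y', hy'⟩ := iInf_lt_iff.1 hs
  calc ⨅ z, Φ (a • x + b • x', z) ≤ Φ (a • (x, y) + b • (x', y')) :=
        iInf_le_of_le (a • y + b • y') le_rfl
    _ ≤ a * Φ (x, y) + b * Φ (x', y') := hΦ _ _ _ _ ha.le hb.le hab
    _ ≤ a * r + b * s := by
        gcongr
    _ = ((a * r + b * s : ℝ) : EReal) := by norm_cast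

end ERealConvex

section LocalConvexExt

variable {ι κ : Type*}

theorem intNbhd_finite [Finite ι] (x : ι → ℝ) : (IntNbhd x).Finite := by
  refine (Set.Finite.pi fun i => Set.finite_Icc ⌈x i - 1⌉ ⌊x i + 1⌋).subset fun z hz i _ => ?_
  have hi := abs_lt.1 (hz i)
  exact ⟨Int.ceil_le.2 (by linarith), Int.le_floor.2 (by linarith)⟩

theorem localConvexExt_le_sum {α : Type*} (f : (ι → ℤ) → EReal) {x : ι → ℝ} {A : Finset α}
    {w : α → ℝ} {p : α → ι → ℤ} (hp : ∀ a ∈ A, p a ∈ IntNbhd x) (hw0 : ∀ a ∈ A, 0 ≤ w a)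
    (hw1 : ∑ a ∈ A, w a = 1) (hx : ∑ a ∈ A, w a • embedZ (p a) = x) :
    LocalConvexExt f x ≤ ∑ a ∈ A, (w a : EReal) * f (p a) := by
  classical
  have mem_fiber {a b : α} (hb : b ∈ A.filter (p · = p a)) : p b = p a := (mem_filter.1 hb).2
  calc LocalConvexExt f x
      ≤ ∑ z ∈ A.image p, ((∑ a ∈ A with p a = z, w a : ℝ) : EReal) * f z := by
        refine sInf_le ⟨A.image p, fun z => ∑ a ∈ A with p a = z, w a, ?_, ?_, ?_, ?_, rfl⟩
        · simp only [mem_image]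
          rintro _ ⟨a, ha, rfl⟩
          exact hp a ha
        · exact fun z _ => sum_nonneg fun a ha => hw0 a (mem_filter.1 ha).1
        · exact (sum_image' (g := p) w fun _ _ => rfl).trans hw1
        · intro i
          rw [← hx, Finset.sum_apply]
          refine sum_image' _ fun a _ => ?_
          rw [sum_mul]
          exact sum_congr rfl fun b hb => by rw [mem_fiber hb]; rfl
    _ = ∑ a ∈ A, (w a : EReal) * f (p a) := by
        refine sum_image' _ fun a _ => ?_
        rw [← EReal.sum_coe_mul_of_nonneg fun b hb => hw0 b (mem_filter.1 hb).1]
        exact sum_congr rfl fun b hb => by rw [mem_fiber hb]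

theorem localConvexExt_embedZ_le (f : (ι → ℤ) → EReal) (p : ι → ℤ) :
    LocalConvexExt f (embedZ p) ≤ f p := by
  simpa using localConvexExt_le_sum f (A := {p}) (w := fun _ => 1) (p := id)
    (by simp [IntNbhd, embedZ]) (by simp) (by simp) (by simp)

theorem localConvexExt_ne_bot [Finite ι] {f : (ι → ℤ) → EReal} (hf : ∀ z, f z ≠ ⊥)
    (x : ι → ℝ) : LocalConvexExt f x ≠ ⊥ := by
  obtain ⟨z₀, hz₀⟩ := Set.exists_lower_bound_image (IntNbhd x) f (intNbhd_finite x)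
  obtain ⟨r, -, hr⟩ := EReal.exists_between_coe_real (bot_lt_iff_ne_bot.2 (hf z₀))
  refine ne_bot_of_le_ne_bot (EReal.coe_ne_bot r) (le_sInf ?_)
  rintro _ ⟨A, w, hA, hw0, hw1, -, rfl⟩
  calc (r : EReal) = ∑ z ∈ A, (w z : EReal) * r := by
        rw [EReal.sum_coe_mul_of_nonneg hw0, hw1, EReal.coe_one, one_mul]
    _ ≤ ∑ z ∈ A, (w z : EReal) * f z := sum_le_sum fun z hz =>
        mul_le_mul_of_nonneg_left (hr.le.trans (hz₀ z (hA z hz))) (EReal.coe_nonneg.2 (hw0 z hz))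

theorem localConvexExt_le_localConvexExt_sumElim (f : (ι ⊕ κ → ℤ) → EReal)
    {g : (ι → ℤ) → EReal} (hg : ∀ x, g x = ⨅ y, f (Sum.elim x y)) (x : ι → ℝ) (y : κ → ℝ) :
    LocalConvexExt g x ≤ LocalConvexExt f (Sum.elim x y) := by
  refine le_sInf ?_
  rintro _ ⟨A, w, hA, hw0, hw1, hx, rfl⟩
  calc LocalConvexExt g x ≤ ∑ z ∈ A, (w z : EReal) * g (z ∘ Sum.inl) :=
        localConvexExt_le_sum g (fun z hz i => hA z hz (.inl i)) hw0 hw1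
          (funext fun i => by simpa [embedZ] using hx (.inl i))
    _ ≤ ∑ z ∈ A, (w z : EReal) * f z := sum_le_sum fun z hz =>
        mul_le_mul_of_nonneg_left
          (by rw [hg]; exact iInf_le_of_le (z ∘ Sum.inr) (by rw [Sum.elim_comp_inl_inr]))
          (EReal.coe_nonneg.2 (hw0 z hz))

theorem iInf_localConvexExt_sumElim_le {f : (ι ⊕ κ → ℤ) → EReal} (hf : IntegrallyConvexFn f)
    {g : (ι → ℤ) → EReal} (hg : ∀ x, g x = ⨅ y, f (Sum.elim x y)) (hgbot : ∀ x, g x ≠ ⊥)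
    (x : ι → ℝ) : ⨅ y, LocalConvexExt f (Sum.elim x y) ≤ LocalConvexExt g x := by
  refine le_sInf ?_
  rintro _ ⟨A, w, -, hw0, hw1, hx, rfl⟩
  refine EReal.le_of_forall_lt_iff_le.1 fun r hr => ?_
  have hinf : ∀ z ∈ A, (w z : EReal) * g z = ⨅ y, (w z : EReal) * f (Sum.elim z y) :=
    fun z hz => by rw [hg, EReal.coe_mul_iInf_of_nonneg (hw0 z hz)]
  have hinf_ne_bot : ∀ z ∈ A, ⨅ y, (w z : EReal) * f (Sum.elim z y) ≠ ⊥ := fun z hz =>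
    hinf z hz ▸ (EReal.mul_ne_bot _ _).2 ⟨.inl (EReal.coe_ne_bot _), .inr (hgbot z),
      .inl (EReal.coe_ne_top _), .inl (EReal.coe_nonneg.2 (hw0 z hz))⟩
  obtain ⟨W, hW⟩ := EReal.exists_sum_lt_of_sum_iInf_lt hinf_ne_bot (sum_congr rfl hinf ▸ hr)
  set P := ∑ z ∈ A, w z • embedZ (Sum.elim z (W z))
  have hPx : P ∘ Sum.inl = x := funext fun i => by simpa [P, embedZ] using hx i
  calc ⨅ y, LocalConvexExt f (Sum.elim x y) ≤ LocalConvexExt f P :=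
        iInf_le_of_le (P ∘ Sum.inr) (by rw [← hPx, Sum.elim_comp_inl_inr])
    _ ≤ ∑ z ∈ A, (w z : EReal) * LocalConvexExt f (embedZ (Sum.elim z (W z))) :=
        ERealConvex.map_sum_le hf hw0 hw1
    _ ≤ ∑ z ∈ A, (w z : EReal) * f (Sum.elim z (W z)) := sum_le_sum fun z hz =>
        mul_le_mul_of_nonneg_left (localConvexExt_embedZ_le f _) (EReal.coe_nonneg.2 (hw0 z hz))
    _ ≤ r := hW.le

theorem localConvexExt_eq_iInf_sumElim {f : (ι ⊕ κ → ℤ) → EReal} (hf : IntegrallyConvexFn f)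
    {g : (ι → ℤ) → EReal} (hg : ∀ x, g x = ⨅ y, f (Sum.elim x y)) (hgbot : ∀ x, g x ≠ ⊥)
    (x : ι → ℝ) : LocalConvexExt g x = ⨅ y, LocalConvexExt f (Sum.elim x y) :=
  le_antisymm (le_iInf (localConvexExt_le_localConvexExt_sumElim f hg x))
    (iInf_localConvexExt_sumElim_le hf hg hgbot x)

end LocalConvexExt

theorem projection_of_integrally_convex_fn_general (n m : ℕ)
    (f : ((Fin n ⊕ Fin m) → ℤ) → EReal)
    (hf : IntegrallyConvexFn f)
    (g : (Fin n → ℤ) → EReal)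
    (hg : ∀ x, g x = ⨅ y : Fin m → ℤ, f (Sum.elim x y))
    (hgbot : ∀ x, g x ≠ ⊥) :
    IntegrallyConvexFn g := by
  have hproj : LocalConvexExt g = fun x => ⨅ y, LocalConvexExt f (Sum.elim x y) :=
    funext (localConvexExt_eq_iInf_sumElim hf hg hgbot)
  have hjoint : ERealConvex fun p : (Fin n → ℝ) × (Fin m → ℝ) =>
      LocalConvexExt f (Sum.elim p.1 p.2) :=
    ERealConvex.comp_linearMap hf (LinearEquiv.sumArrowLequivProdArrow _ _ ℝ ℝ).symm.toLinearMap
  show ERealConvex (LocalConvexExt g)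
  rw [hproj]
  exact hjoint.iInf_snd fun x => congrFun hproj x ▸ localConvexExt_ne_bot hgbot x

/-- The projection of an integrally convex function is integrally convex. -/
theorem projection_of_integrally_convex_fn (n m : ℕ)
    (f : ((Fin n ⊕ Fin m) → ℤ) → EReal) (hfbot : ∀ z, f z ≠ ⊥)
    (hf : IntegrallyConvexFn f)
    (g : (Fin n → ℤ) → EReal)
    (hg : ∀ x, g x = ⨅ y : Fin m → ℤ, f (Sum.elim x y))
    (hgbot : ∀ x, g x ≠ ⊥) :
    IntegrallyConvexFn g :=
  projection_of_integrally_convex_fn_general n m f hf g hg hgbot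
end
end

section
/- Let S ⊆ ℤ^{n+m} be a discrete midpoint convex set and let T = { x ∈ ℤ^n : ∃ y ∈ ℤ^m, (x,y) ∈ S } be its projection to ℤ^n. Then T is a discrete midpoint convex set. -/
open scoped BigOperators

noncomputable section

variable {ι : Type*} [Fintype ι]

/-- The projection of a discrete midpoint convex set is discrete midpoint convex. -/
theorem projection_of_dmc_set (n m : ℕ)
    (S : Set ((Fin n ⊕ Fin m) → ℤ)) (hS : DiscreteMidpointConvexSet S) :
    DiscreteMidpointConvexSet {x : Fin n → ℤ | ∃ y : Fin m → ℤ, Sum.elim x y ∈ S} := by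
  have key : ∀ (x y : Fin n → ℤ) (u v : Fin m → ℤ),
      midUp (Sum.elim x u) (Sum.elim y v) = Sum.elim (midUp x y) (midUp u v) ∧
      midDown (Sum.elim x u) (Sum.elim y v) = Sum.elim (midDown x y) (midDown u v) := by
    intro x u y v
    constructor <;> funext i <;> cases i <;> rfl
  rintro x ⟨u, hu⟩ y ⟨v, hv⟩ ⟨i, hi⟩
  have hdist : ∃ j, 2 ≤ |Sum.elim x u j - Sum.elim y v j| := ⟨Sum.inl i, hi⟩
  obtain ⟨h1, h2⟩ := hS _ hu _ hv hdist
  obtain ⟨e1, e2⟩ := key x y u v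
  rw [e1] at h1; rw [e2] at h2
  exact ⟨⟨midUp u v, h1⟩, ⟨midDown u v, h2⟩⟩
end
end

section
/- Let f : ℤ^{n+m} → ℝ ∪ {+∞} be a globally discrete midpoint convex function and define g : ℤ^n → ℝ ∪ {+∞} by g(x) = inf { f(x,y) : y ∈ ℤ^m }. If g(x) > −∞ for every x ∈ ℤ^n, then g is a globally discrete midpoint convex function. -/
open scoped BigOperators

noncomputable section

variable {ι : Type*} [Fintype ι]

lemma ereal_le_iInf_add {α : Type*} [Nonempty α] (a b : EReal) (c : α → EReal) (hb : b ≠ ⊥)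
    (hinf : (⨅ u, c u) ≠ ⊥) (h : ∀ u, a ≤ c u + b) : a ≤ (⨅ u, c u) + b := by
  rcases eq_or_ne b ⊤ with rfl | hbt
  · rw [EReal.add_top_iff_ne_bot.2 hinf]; exact le_top
  · have h1 : a - b ≤ ⨅ u, c u :=
      le_iInf fun u => (EReal.sub_le_iff_le_add (Or.inl hb) (Or.inl hbt)).2 (h u)
    exact (EReal.sub_le_iff_le_add (Or.inl hb) (Or.inl hbt)).1 h1

/-- The projection of a globally discrete midpoint convex function
is globally discrete midpoint convex. -/
theorem projection_of_globally_dmc_fn (n m : ℕ)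
    (f : ((Fin n ⊕ Fin m) → ℤ) → EReal) (hfbot : ∀ z, f z ≠ ⊥)
    (hf : GloballyDMC f)
    (g : (Fin n → ℤ) → EReal)
    (hg : ∀ x, g x = ⨅ y : Fin m → ℤ, f (Sum.elim x y))
    (hgbot : ∀ x, g x ≠ ⊥) :
    GloballyDMC g := by
  intro x y hxy
  obtain ⟨i, hi⟩ := hxy
  have key : ∀ y1 y2 : Fin m → ℤ,
      g (midUp x y) + g (midDown x y) ≤ f (Sum.elim x y1) + f (Sum.elim y y2) := by
    intro y1 y2
    have hmu : midUp (Sum.elim x y1) (Sum.elim y y2) = Sum.elim (midUp x y) (midUp y1 y2) := by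
      funext k; cases k <;> rfl
    have hmd : midDown (Sum.elim x y1) (Sum.elim y y2)
        = Sum.elim (midDown x y) (midDown y1 y2) := by
      funext k; cases k <;> rfl
    have h1 : g (midUp x y) ≤ f (Sum.elim (midUp x y) (midUp y1 y2)) := by
      rw [hg]; exact iInf_le _ _
    have h2 : g (midDown x y) ≤ f (Sum.elim (midDown x y) (midDown y1 y2)) := by
      rw [hg]; exact iInf_le _ _
    calc g (midUp x y) + g (midDown x y)
        ≤ f (Sum.elim (midUp x y) (midUp y1 y2))
          + f (Sum.elim (midDown x y) (midDown y1 y2)) := add_le_add h1 h2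
      _ = f (midUp (Sum.elim x y1) (Sum.elim y y2))
          + f (midDown (Sum.elim x y1) (Sum.elim y y2)) := by rw [hmu, hmd]
      _ ≤ f (Sum.elim x y1) + f (Sum.elim y y2) :=
          hf _ _ ⟨Sum.inl i, by simpa using hi⟩
  have key2 : ∀ y1 : Fin m → ℤ,
      g (midUp x y) + g (midDown x y) ≤ g y + f (Sum.elim x y1) := by
    intro y1
    rw [hg y]
    exact ereal_le_iInf_add _ _ _ (hfbot _) (by rw [← hg]; exact hgbot y)
      (fun y2 => by rw [add_comm (f (Sum.elim y y2))]; exact key y1 y2)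
  have final : g (midUp x y) + g (midDown x y) ≤ g x + g y := by
    rw [hg x]
    exact ereal_le_iInf_add _ _ _ (hgbot y) (by rw [← hg]; exact hgbot x)
      (fun y1 => by rw [add_comm (f (Sum.elim x y1))]; exact key2 y1)
  exact final
end
end

section
/- Let S ⊆ ℤ^n be an integrally convex set and let B ⊆ ℤ^n be an integer interval, i.e., B = { x ∈ ℤ^n : a_i ≤ x_i ≤ b_i for all i } for some a ∈ (ℤ ∪ {−∞})^n and b ∈ (ℤ ∪ {+∞})^n with a ≤ b. Then the Minkowski sum S + B = { y + z : y ∈ S, z ∈ B } is an integrally convex set. -/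
open scoped BigOperators Pointwise

noncomputable section

variable {ι : Type*} [Fintype ι]

/-!
Adding the coordinates of the box one at a time, it suffices to treat `S + K e_j` with `K ⊆ ℤ`
an interval. A point of its hull is `u + t e_j` with `u ∈ conv S` and `⌊t⌋, ⌈t⌉ ∈ K`, and `u` is
a convex combination of points of `S ∩ N(u)`, whose `j`-th coordinates are `⌊u_j⌋` or
`⌊u_j⌋ + 1`. Move each of these points up by `⌊t⌋ e_j` and then by one more unit with a
probability depending affinely on its height; the two probabilities can be chosen so that the mean
extra shift is `fract t` and every outcome of positive probability lies within distance `< 1` of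
`u_j + t`. The outcomes then lie in `(S + K e_j) ∩ N(u + t e_j)`, and since the shift is an affine
map of `u`, the same combination of them gives `u + t e_j`.
-/

section

variable {ι : Type*}

theorem embedZ_add (y z : ι → ℤ) : embedZ (y + z) = embedZ y + embedZ z := by
  ext i
  simp [embedZ]

theorem embedZ_single [DecidableEq ι] (j : ι) (k : ℤ) :
    embedZ (Pi.single j k) = Pi.single j (k : ℝ) := by
  ext i
  simp [embedZ, Pi.single_apply, apply_ite (Int.cast : ℤ → ℝ)]

theorem image_embedZ_add (A B : Set (ι → ℤ)) :
    embedZ '' (A + B) = embedZ '' A + embedZ '' B :=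
  Set.image_add (AddMonoidHom.compLeft (Int.castAddHom ℝ) ι)

theorem image_embedZ_image_single [DecidableEq ι] (j : ι) (K : Set ℤ) :
    embedZ '' (Pi.single j '' K) = Pi.single j '' ((Int.cast : ℤ → ℝ) '' K) := by
  simp only [Set.image_image, embedZ_single]

theorem Int.eq_floor_or_eq_floor_add_one_of_abs_sub_lt_one {y : ℝ} {k : ℤ} (h : |y - k| < 1) :
    k = ⌊y⌋ ∨ k = ⌊y⌋ + 1 := by
  rw [abs_lt] at h
  have h₁ : ⌊y⌋ ≤ k := Int.floor_le_iff.mpr (by linarith)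
  have h₂ : k - 1 ≤ ⌊y⌋ := Int.le_floor.mpr (by push_cast; linarith)
  omega

theorem Set.OrdConnected.floor_mem_and_ceil_mem {K : Set ℤ} (hK : K.OrdConnected) {t : ℝ}
    (ht : t ∈ convexHull ℝ ((Int.cast : ℤ → ℝ) '' K)) : ⌊t⌋ ∈ K ∧ ⌈t⌉ ∈ K := by
  refine convexHull_min (t := {t : ℝ | ⌊t⌋ ∈ K ∧ ⌈t⌉ ∈ K}) ?_ ?_ ht
  · rintro _ ⟨k, hk, rfl⟩
    simpa using hk
  · refine convex_iff_ordConnected.mpr ⟨fun a ha b hb s hs => ?_⟩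
    have hab : Set.Icc ⌊a⌋ ⌈b⌉ ⊆ K := hK.out ha.1 hb.2
    exact ⟨hab ⟨Int.floor_mono hs.1, (Int.floor_le_ceil s).trans (Int.ceil_mono hs.2)⟩,
      hab ⟨(Int.floor_le_ceil a).trans (Int.ceil_mono hs.1), Int.ceil_mono hs.2⟩⟩

theorem Convex.add_smul_mem_of_lt_one_imp_of_pos_imp {E : Type*} [AddCommGroup E] [Module ℝ E]
    {C : Set E} (hC : Convex ℝ C) {x y : E} {s : ℝ} (hs₀ : 0 ≤ s) (hs₁ : s ≤ 1)
    (hx : s < 1 → x ∈ C) (hy : 0 < s → x + y ∈ C) : x + s • y ∈ C := by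
  rcases hs₀.eq_or_lt with rfl | hs₀
  · simpa using hx zero_lt_one
  rcases hs₁.eq_or_lt with rfl | hs₁
  · simpa using hy hs₀
  exact hC.add_smul_mem (hx hs₁) (hy hs₀) ⟨hs₀.le, hs₁.le⟩

-- `φ = fract u_j`, `θ = fract t`, and `h` is the height above `⌊u_j⌋` of a point of `S ∩ N(u)`.
theorem exists_affine_shift_probability {φ θ : ℝ} (hφ₀ : 0 ≤ φ) (hφ₁ : φ < 1) (hθ₀ : 0 ≤ θ)
    (hθ₁ : θ < 1) :
    ∃ a b : ℝ, a + b * φ = θ ∧ ∀ h : ℝ, (h = 0 ∨ h = 1) → |φ - h| < 1 →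
      a + b * h ∈ Set.Icc 0 1 ∧ (a + b * h < 1 → |φ + θ - h| < 1) ∧
        (0 < a + b * h → 0 < θ ∧ |φ + θ - (h + 1)| < 1) := by
  rcases le_or_gt (φ + θ) 1 with hle | hgt
  · have hφ : 0 < 1 - φ := by linarith
    refine ⟨θ / (1 - φ), -(θ / (1 - φ)), by field_simp; ring, ?_⟩
    rintro h (rfl | rfl) hh <;>
      simp only [abs_lt, Set.mem_Icc, mul_zero, mul_one, add_zero, sub_zero, add_neg_cancel]
        at hh ⊢
    · rw [div_le_one hφ, div_lt_one hφ, div_pos_iff_of_pos_right hφ]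
      exact ⟨⟨by positivity, by linarith⟩, fun _ => ⟨by linarith, by linarith⟩,
        fun h => ⟨h, by linarith, by linarith⟩⟩
    · exact ⟨⟨le_rfl, zero_le_one⟩, fun _ => ⟨by linarith, by linarith⟩,
        fun h => absurd h (lt_irrefl 0)⟩
  · have hφ : 0 < φ := by linarith
    refine ⟨1, (θ - 1) / φ, by field_simp; ring, ?_⟩
    rintro h (rfl | rfl) hh <;>
      simp only [abs_lt, Set.mem_Icc, mul_zero, mul_one, add_zero, sub_zero] at hh ⊢
    · exact ⟨⟨zero_le_one, le_rfl⟩, fun h => absurd h (lt_irrefl 1),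
        fun _ => ⟨by linarith, by linarith, by linarith⟩⟩
    · have hneg : (θ - 1) / φ < 0 := div_neg_of_neg_of_pos (by linarith) hφ
      have hge : -1 ≤ (θ - 1) / φ := by rw [le_div_iff₀ hφ]; linarith
      exact ⟨⟨by linarith, by linarith⟩, fun _ => ⟨by linarith, by linarith⟩,
        fun _ => ⟨by linarith, by linarith, by linarith⟩⟩

theorem Convex.preimage_add_affine_smul {C : Set (ι → ℝ)} (hC : Convex ℝ C) (j : ι) (c d : ℝ)
    (e : ι → ℝ) : Convex ℝ ((fun y => y + (c + d * y j) • e) ⁻¹' C) := by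
  intro y hy z hz a b ha hb hab
  obtain rfl : b = 1 - a := by linarith
  have hcomb : (a • y + (1 - a) • z) + (c + d * (a • y + (1 - a) • z) j) • e =
      a • (y + (c + d * y j) • e) + (1 - a) • (z + (c + d * z j) • e) := by
    simp only [Pi.add_apply, Pi.smul_apply, smul_eq_mul]
    module
  rw [Set.mem_preimage, hcomb]
  exact hC hy hz ha hb hab

theorem add_single_mem_inter_intNbhd [DecidableEq ι] {A : Set (ι → ℤ)} {K : Set ℤ}
    {u : ι → ℝ} {p : ι → ℤ} (hp : p ∈ A ∩ IntNbhd u) {k : ℤ} (hk : k ∈ K) {j : ι} {t : ℝ}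
    (hj : |u j + t - (p j + k)| < 1) :
    p + Pi.single j k ∈ (A + Pi.single j '' K) ∩ IntNbhd (u + Pi.single j t) := by
  refine ⟨Set.add_mem_add hp.1 (Set.mem_image_of_mem _ hk), fun i => ?_⟩
  rcases eq_or_ne i j with rfl | hij
  · simpa [add_sub_add_comm] using hj
  · simpa [hij] using hp.2 i

theorem add_smul_single_mem_convexHull_inter_intNbhd [DecidableEq ι] {A : Set (ι → ℤ)}
    {K : Set ℤ} {u : ι → ℝ} {p : ι → ℤ} (hp : p ∈ A ∩ IntNbhd u) {t : ℝ} (hfloor : ⌊t⌋ ∈ K)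
    (hceil : ⌈t⌉ ∈ K) (j : ι) {s : ℝ} (hs : s ∈ Set.Icc 0 1)
    (h₀ : s < 1 → |u j + t - (p j + ⌊t⌋)| < 1)
    (h₁ : 0 < s → 0 < Int.fract t ∧ |u j + t - (p j + ⌊t⌋ + 1)| < 1) :
    embedZ p + (⌊t⌋ + s) • Pi.single j 1 ∈
      convexHull ℝ (embedZ '' ((A + Pi.single j '' K) ∩ IntNbhd (u + Pi.single j t))) := by
  have hmem : ∀ k ∈ K, |u j + t - (p j + k)| < 1 →
      embedZ p + (k : ℝ) • Pi.single j 1 ∈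
        convexHull ℝ (embedZ '' ((A + Pi.single j '' K) ∩ IntNbhd (u + Pi.single j t))) :=
    fun k hk h => subset_convexHull ℝ _ ⟨_, add_single_mem_inter_intNbhd hp hk h, by
      rw [embedZ_add, embedZ_single, ← Pi.single_smul, smul_eq_mul, mul_one]⟩
  rw [add_smul, ← add_assoc]
  refine (convex_convexHull ℝ _).add_smul_mem_of_lt_one_imp_of_pos_imp hs.1 hs.2
    (fun hlt => hmem _ hfloor (h₀ hlt)) fun hpos => ?_
  obtain ⟨hθ, habs⟩ := h₁ hpos
  have hceil' : ⌈t⌉ = ⌊t⌋ + 1 :=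
    (Int.ceil_eq_floor_add_one_iff_notMem t).mpr (Int.fract_ne_zero_iff.mp hθ.ne')
  convert hmem _ (hceil' ▸ hceil) (by push_cast; rwa [← add_assoc]) using 1
  push_cast
  module

theorem add_single_mem_convexHull_inter_intNbhd [DecidableEq ι] {A : Set (ι → ℤ)} {K : Set ℤ}
    {u : ι → ℝ} (hu : u ∈ convexHull ℝ (embedZ '' (A ∩ IntNbhd u))) {t : ℝ} (hfloor : ⌊t⌋ ∈ K)
    (hceil : ⌈t⌉ ∈ K) (j : ι) :
    u + Pi.single j t ∈
      convexHull ℝ (embedZ '' ((A + Pi.single j '' K) ∩ IntNbhd (u + Pi.single j t))) := by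
  obtain ⟨a, b, hmean, hshift⟩ := exists_affine_shift_probability (Int.fract_nonneg (u j))
    (Int.fract_lt_one (u j)) (Int.fract_nonneg t) (Int.fract_lt_one t)
  have huj : u j = ⌊u j⌋ + Int.fract (u j) := (Int.floor_add_fract _).symm
  have ht : t = ⌊t⌋ + Int.fract t := (Int.floor_add_fract _).symm
  have hΦu : u + ((⌊t⌋ + a - b * ⌊u j⌋) + b * u j) • Pi.single j 1 = u + Pi.single j t := by
    rw [← Pi.single_smul, smul_eq_mul, mul_one]
    congr 2
    linear_combination hmean + b * huj - ht
  set C := convexHull ℝ (embedZ '' ((A + Pi.single j '' K) ∩ IntNbhd (u + Pi.single j t)))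
  suffices hsub : embedZ '' (A ∩ IntNbhd u) ⊆
      (fun y => y + ((⌊t⌋ + a - b * ⌊u j⌋) + b * y j) • Pi.single j 1) ⁻¹' C by
    have := convexHull_min hsub ((convex_convexHull ℝ _).preimage_add_affine_smul j _ b _) hu
    rwa [Set.mem_preimage, hΦu] at this
  rintro _ ⟨p, hp, rfl⟩
  have hh01 : (p j - ⌊u j⌋ : ℝ) = 0 ∨ (p j - ⌊u j⌋ : ℝ) = 1 := by
    rcases Int.eq_floor_or_eq_floor_add_one_of_abs_sub_lt_one (hp.2 j) with hpj | hpj <;>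
      simp [hpj]
  have hφh : |Int.fract (u j) - (p j - ⌊u j⌋ : ℝ)| < 1 := by
    convert hp.2 j using 2
    linear_combination -huj
  obtain ⟨hs, hs₁, hs₀⟩ := hshift _ hh01 hφh
  have hΦp : (⌊t⌋ + a - b * ⌊u j⌋) + b * embedZ p j = ⌊t⌋ + (a + b * (p j - ⌊u j⌋)) := by
    simp only [embedZ]
    ring
  rw [Set.mem_preimage, hΦp]
  refine add_smul_single_mem_convexHull_inter_intNbhd hp hfloor hceil j hs
    (fun hlt => ?_) fun hpos => ⟨(hs₀ hpos).1, ?_⟩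
  · convert hs₁ hlt using 2
    linear_combination huj + ht
  · convert (hs₀ hpos).2 using 2
    linear_combination huj + ht

theorem IntegrallyConvexSet.add_image_single [DecidableEq ι] {S : Set (ι → ℤ)}
    (hS : IntegrallyConvexSet S) {K : Set ℤ} (hK : K.OrdConnected) (j : ι) :
    IntegrallyConvexSet (S + Pi.single j '' K) := by
  intro x hx
  rw [image_embedZ_add, convexHull_add, image_embedZ_image_single,
    ← LinearMap.coe_single ℝ (fun _ : ι => ℝ) j, ← LinearMap.image_convexHull] at hx
  obtain ⟨u, hu, _, ⟨t, ht, rfl⟩, rfl⟩ := hx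
  obtain ⟨hfloor, hceil⟩ := hK.floor_mem_and_ceil_mem ht
  exact add_single_mem_convexHull_inter_intNbhd (hS u hu) hfloor hceil j

theorem Set.univ_pi_update_eq_add_image_single [DecidableEq ι] {K : ι → Set ℤ} {j : ι}
    (hKj : K j = {0}) (L : Set ℤ) :
    Set.univ.pi (Function.update K j L) = Set.univ.pi K + Pi.single j '' L := by
  ext y
  constructor
  · intro hy
    refine ⟨Function.update y j 0, fun i _ => ?_, Pi.single j (y j),
      ⟨y j, by simpa using hy j trivial, rfl⟩, ?_⟩
    · rcases eq_or_ne i j with rfl | hij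
      · simp [hKj]
      · simpa [hij] using hy i trivial
    · ext i
      rcases eq_or_ne i j with rfl | hij <;> simp [*]
  · rintro ⟨x, hx, _, ⟨l, hl, rfl⟩, rfl⟩ i -
    rcases eq_or_ne i j with rfl | hij
    · have : x i = 0 := by simpa [hKj] using hx i trivial
      simpa [this] using hl
    · simpa [hij] using hx i trivial

theorem IntegrallyConvexSet.add_univ_pi [Fintype ι] {S : Set (ι → ℤ)} (hS : IntegrallyConvexSet S)
    {K : ι → Set ℤ} (hK : ∀ i, (K i).OrdConnected) : IntegrallyConvexSet (S + Set.univ.pi K) := by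
  classical
  suffices ∀ F : Finset ι, IntegrallyConvexSet (S + Set.univ.pi (F.piecewise K fun _ => {0})) by
    simpa using this Finset.univ
  intro F
  induction F using Finset.induction_on with
  | empty =>
    have hzero : (Set.univ.pi fun _ : ι => ({0} : Set ℤ)) = 0 :=
      (Set.univ_pi_singleton (0 : ι → ℤ)).trans Set.singleton_zero
    rwa [Finset.piecewise_empty, hzero, add_zero]
  | insert j F hj ih =>
    rw [Finset.piecewise_insert, Set.univ_pi_update_eq_add_image_single (by simp [hj]), ← add_assoc]
    exact ih.add_image_single (hK j) j

end

/-- The Minkowski sum of an integrally convex set and an integer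
interval is integrally convex. -/
theorem minkowski_sum_integrally_convex_box (n : ℕ)
    (S B : Set (Fin n → ℤ)) (hS : IntegrallyConvexSet S)
    (hB : IsIntegerInterval B) :
    IntegrallyConvexSet (S + B) := by
  obtain ⟨a, b, -, -, -, rfl⟩ := hB
  have hbox : {x : Fin n → ℤ | ∀ i, a i ≤ ((x i : ℝ) : EReal) ∧ ((x i : ℝ) : EReal) ≤ b i} =
      Set.univ.pi fun i => (fun k : ℤ => ((k : ℝ) : EReal)) ⁻¹' Set.Icc (a i) (b i) := by
    ext x
    simp [Set.mem_pi]
  rw [hbox]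
  refine hS.add_univ_pi fun i => Set.ordConnected_Icc.preimage_mono fun k l hkl => ?_
  exact_mod_cast hkl
end
end

section
/- Let S ⊆ ℤ^n be an integrally convex set, let e₁ = (1,0,…,0) ∈ ℤ^n, and let B = { t e₁ : t ∈ ℤ, â ≤ t ≤ b̂ } where â ∈ ℤ ∪ {−∞} and b̂ ∈ ℤ ∪ {+∞} with â ≤ b̂. Then the Minkowski sum S + B = { y + z : y ∈ S, z ∈ B } is an integrally convex set. -/
open scoped BigOperators Pointwise

noncomputable section

variable {ι : Type*} [Fintype ι]

/-- The Minkowski sum of an integrally convex set and a segment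
`{t e₁ : â ≤ t ≤ b̂}` along the first coordinate axis is integrally convex. -/
theorem minkowski_sum_integrally_convex_segment (n : ℕ)
    (S : Set (Fin (n + 1) → ℤ)) (hS : IntegrallyConvexSet S)
    (ahat bhat : EReal)
    (ha : ahat = ⊥ ∨ ∃ k : ℤ, ahat = ((k : ℝ) : EReal))
    (hb : bhat = ⊤ ∨ ∃ k : ℤ, bhat = ((k : ℝ) : EReal))
    (hab : ahat ≤ bhat) :
    IntegrallyConvexSet
      (S + {z : Fin (n + 1) → ℤ | ∃ t : ℤ,
        z = t • (fun i => if i = (0 : Fin (n + 1)) then (1 : ℤ) else 0) ∧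
        ahat ≤ ((t : ℝ) : EReal) ∧ ((t : ℝ) : EReal) ≤ bhat}) := by
  classical
  intro x hx
  set e1 : Fin (n+1) → ℤ := (fun i => if i = (0 : Fin (n + 1)) then (1 : ℤ) else 0) with he1
  rw [convexHull_eq] at hx
  obtain ⟨κ, t, w, z, hw0, hw1, hzT, hxc⟩ := hx
  have hdec : ∀ j, ∃ (y : Fin (n+1) → ℤ) (s : ℤ), j ∈ t →
      y ∈ S ∧ (ahat ≤ ((s : ℝ) : EReal) ∧ ((s : ℝ) : EReal) ≤ bhat) ∧ z j = embedZ (y + s • e1) := by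
    intro j
    by_cases hj : j ∈ t
    · obtain ⟨v, hv, hvz⟩ := hzT j hj
      obtain ⟨y, hy, b, hbB, hyb⟩ := Set.mem_add.mp hv
      obtain ⟨s, hbs, hs1, hs2⟩ := hbB
      exact ⟨y, s, fun _ => ⟨hy, ⟨hs1, hs2⟩, by rw [← hvz, ← hyb, hbs]⟩⟩
    · exact ⟨0, 0, fun h => absurd h hj⟩
  choose Y sf hYs using hdec
  set x' : Fin (n+1) → ℝ := fun i => ∑ j ∈ t, w j * (Y j i : ℝ) with hx'def
  set τ : ℝ := ∑ j ∈ t, w j * (sf j : ℝ) with hτdef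
  have hxi : ∀ i, x i = x' i + τ * (if i = (0:Fin (n+1)) then (1:ℝ) else 0) := by
    intro i
    have hh := hxc
    rw [Finset.centerMass_eq_of_sum_1 t z hw1] at hh
    have hx_i : x i = ∑ j ∈ t, w j * z j i := by
      rw [← hh, Finset.sum_apply]
      simp [Pi.smul_apply, smul_eq_mul]
    rw [hx_i]
    have hterm : ∀ j ∈ t, w j * z j i
        = w j * (Y j i : ℝ) + (w j * (sf j : ℝ)) * (if i = (0:Fin (n+1)) then (1:ℝ) else 0) := by
      intro j hj
      obtain ⟨hy, hfeas, hz⟩ := hYs j hj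
      rw [hz]
      simp only [embedZ, Pi.add_apply, Pi.smul_apply, he1, smul_eq_mul]
      push_cast
      by_cases hi : i = 0 <;> simp [hi] <;> ring
    rw [Finset.sum_congr rfl hterm, Finset.sum_add_distrib, ← Finset.sum_mul]
  have hxne : ∀ i, i ≠ (0:Fin (n+1)) → x i = x' i := by
    intro i hi; have := hxi i; simpa [hi] using this
  have hx0 : x 0 = x' 0 + τ := by have := hxi 0; simpa using this
  have hx'S : x' ∈ convexHull ℝ (embedZ '' S) := by
    have hcm : t.centerMass w (fun j => embedZ (Y j)) = x' := by
      rw [Finset.centerMass_eq_of_sum_1 _ _ hw1]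
      funext i
      rw [Finset.sum_apply, hx'def]
      simp [embedZ, smul_eq_mul]
    rw [← hcm]
    exact Finset.centerMass_mem_convexHull t hw0 (by rw [hw1]; norm_num)
      (fun j hj => ⟨Y j, (hYs j hj).1, rfl⟩)
  have haτ : ∀ k : ℤ, ahat = ((k : ℝ) : EReal) → (k:ℝ) ≤ τ := by
    intro k hk
    have hle : ∀ j ∈ t, (k:ℝ) ≤ (sf j : ℝ) := by
      intro j hj
      have h1 := (hYs j hj).2.1.1
      rw [hk, EReal.coe_le_coe_iff] at h1
      exact h1
    calc (k:ℝ) = ∑ j ∈ t, w j * (k:ℝ) := by rw [← Finset.sum_mul, hw1, one_mul]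
      _ ≤ ∑ j ∈ t, w j * (sf j : ℝ) :=
        Finset.sum_le_sum (fun j hj => mul_le_mul_of_nonneg_left (hle j hj) (hw0 j hj))
  have hbτ : ∀ k : ℤ, bhat = ((k : ℝ) : EReal) → τ ≤ (k:ℝ) := by
    intro k hk
    have hle : ∀ j ∈ t, (sf j : ℝ) ≤ (k:ℝ) := by
      intro j hj
      have h1 := (hYs j hj).2.1.2
      rw [hk, EReal.coe_le_coe_iff] at h1
      exact h1
    calc ∑ j ∈ t, w j * (sf j : ℝ) ≤ ∑ j ∈ t, w j * (k:ℝ) :=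
        Finset.sum_le_sum (fun j hj => mul_le_mul_of_nonneg_left (hle j hj) (hw0 j hj))
      _ = (k:ℝ) := by rw [← Finset.sum_mul, hw1, one_mul]
  have hx'2 := hS x' hx'S
  rw [convexHull_eq] at hx'2
  obtain ⟨κ₂, t₂, μ, ζ, hμ0, hμ1, hζ, hx'c⟩ := hx'2
  set Z : κ₂ → (Fin (n+1) → ℤ) := fun k i => ⌊ζ k i⌋ with hZdef'
  have hZdef : ∀ k ∈ t₂, (Z k ∈ S ∩ IntNbhd x') ∧ embedZ (Z k) = ζ k := by
    intro k hk
    obtain ⟨v, hv, hvz⟩ := hζ k hk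
    have : Z k = v := by
      funext i; rw [hZdef']; simp only [← hvz, embedZ, Int.floor_intCast]
    rw [this, hvz]; exact ⟨hv, rfl⟩
  have hx'k : ∀ i, x' i = ∑ k ∈ t₂, μ k * (Z k i : ℝ) := by
    intro i
    conv_lhs => rw [← hx'c]
    rw [Finset.centerMass_eq_of_sum_1 _ _ hμ1, Finset.sum_apply]
    refine Finset.sum_congr rfl fun k hk => ?_
    rw [Pi.smul_apply, smul_eq_mul, ← (hZdef k hk).2]
    rfl
  set p : ℤ := ⌊x' 0⌋ with hpdef
  set F : ℝ := x' 0 - p with hFdef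
  set c : ℤ := ⌊x 0⌋ with hcdef
  set φ : ℝ := x 0 - c with hφdef
  have hF0 : 0 ≤ F := by rw [hFdef]; have := Int.floor_le (x' 0); linarith
  have hF1 : F < 1 := by rw [hFdef]; have := Int.lt_floor_add_one (x' 0); push_cast at this ⊢; linarith
  have hφ0 : 0 ≤ φ := by rw [hφdef]; have := Int.floor_le (x 0); linarith
  have hφ1 : φ < 1 := by rw [hφdef]; have := Int.lt_floor_add_one (x 0); push_cast at this ⊢; linarith
  have hZ01 : ∀ k ∈ t₂, Z k 0 = p ∨ Z k 0 = p + 1 := by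
    intro k hk
    have hN := ((hZdef k hk).1).2 0
    rw [abs_lt] at hN
    have h1 : (p:ℝ) ≤ x' 0 := Int.floor_le (x' 0)
    have h2 : x' 0 < (p:ℝ) + 1 := by have := Int.lt_floor_add_one (x' 0); push_cast at this ⊢; linarith
    have hl : (p:ℝ) - 1 < (Z k 0 : ℝ) := by linarith
    have hr : (Z k 0 : ℝ) < (p:ℝ) + 2 := by linarith
    have hl' : p - 1 < Z k 0 := by exact_mod_cast hl
    have hr' : Z k 0 < p + 2 := by exact_mod_cast hr
    omega
  have hG : (∑ k ∈ t₂.filter (fun k => Z k 0 = p + 1), μ k) = F := by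
    have key : ∑ k ∈ t₂, μ k * ((Z k 0 : ℝ) - (p:ℝ)) = F := by
      have : ∑ k ∈ t₂, μ k * ((Z k 0 : ℝ) - (p:ℝ))
          = (∑ k ∈ t₂, μ k * (Z k 0 : ℝ)) - (∑ k ∈ t₂, μ k) * (p:ℝ) := by
        rw [Finset.sum_mul, ← Finset.sum_sub_distrib]
        exact Finset.sum_congr rfl fun k hk => by ring
      rw [this, ← hx'k, hμ1, hFdef]; ring
    rw [← key, ← Finset.sum_filter_add_sum_filter_not t₂ (fun k => Z k 0 = p + 1)
      (fun k => μ k * ((Z k 0 : ℝ) - (p:ℝ)))]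
    have e2 : ∑ k ∈ t₂.filter (fun k => ¬ Z k 0 = p + 1), μ k * ((Z k 0:ℝ) - p) = 0 := by
      refine Finset.sum_eq_zero fun k hk => ?_
      obtain ⟨hkt, hk0⟩ := Finset.mem_filter.mp hk
      rcases hZ01 k hkt with h | h
      · rw [h]; simp
      · exact absurd h hk0
    have e1' : ∑ k ∈ t₂.filter (fun k => Z k 0 = p + 1), μ k * ((Z k 0:ℝ) - p)
        = ∑ k ∈ t₂.filter (fun k => Z k 0 = p + 1), μ k := by
      refine Finset.sum_congr rfl fun k hk => ?_
      obtain ⟨hkt, hk0⟩ := Finset.mem_filter.mp hk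
      rw [hk0]; push_cast; ring
    rw [e2, e1', add_zero]
  -- feasibility facts
  have feas_lo : ahat ≤ (((c - p : ℤ) : ℝ) : EReal) := by
    rcases ha with h | ⟨k, hk⟩
    · rw [h]; exact bot_le
    · have hkτ : (k:ℝ) ≤ τ := haτ k hk
      have : p + k ≤ c := by
        have h1 : (⌊x' 0 + (k:ℝ)⌋ : ℤ) ≤ c := by
          rw [hcdef, hx0]; exact Int.floor_le_floor (by linarith)
        rw [Int.floor_add_intCast] at h1; omega
      rw [hk, EReal.coe_le_coe_iff]; exact_mod_cast (by omega : k ≤ c - p)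
  have feas_hi : (((c - p : ℤ) : ℝ) : EReal) ≤ bhat := by
    rcases hb with h | ⟨k, hk⟩
    · rw [h]; exact le_top
    · have hkτ : τ ≤ (k:ℝ) := hbτ k hk
      have : c ≤ p + k := by
        have h1 : c ≤ (⌊x' 0 + (k:ℝ)⌋ : ℤ) := by
          rw [hcdef, hx0]; exact Int.floor_le_floor (by linarith)
        rw [Int.floor_add_intCast] at h1; omega
      rw [hk, EReal.coe_le_coe_iff]; exact_mod_cast (by omega : c - p ≤ k)
  have feas2 : F < φ → (((c + 1 - p : ℤ) : ℝ) : EReal) ≤ bhat := by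
    intro hFφ
    rcases hb with h | ⟨k, hk⟩
    · rw [h]; exact le_top
    · by_contra hcon
      rw [hk, EReal.coe_le_coe_iff] at hcon
      push_neg at hcon
      have hk' : k ≤ c - p := by
        have h1 : (k:ℝ) < ((c+1-p:ℤ):ℝ) := hcon
        have h2 : k < c + 1 - p := by exact_mod_cast h1
        omega
      have hτ' : τ ≤ ((c:ℝ) - p) := le_trans (hbτ k hk) (by exact_mod_cast hk')
      have hpF : (p:ℝ) + F = x' 0 := by rw [hFdef]; ring
      have : φ ≤ F := by rw [hφdef, hx0]; linarith
      linarith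
  have feas3 : φ < F → ahat ≤ (((c - 1 - p : ℤ) : ℝ) : EReal) := by
    intro hφF
    rcases ha with h | ⟨k, hk⟩
    · rw [h]; exact bot_le
    · by_contra hcon
      rw [hk, EReal.coe_le_coe_iff] at hcon
      push_neg at hcon
      have hk' : c - p ≤ k := by
        have h1 : ((c-1-p:ℤ):ℝ) < (k:ℝ) := hcon
        have h2 : c - 1 - p < k := by exact_mod_cast h1
        omega
      have hτ' : ((c:ℝ) - p) ≤ τ := le_trans (by exact_mod_cast hk') (haτ k hk)
      have hpF : (p:ℝ) + F = x' 0 := by rw [hFdef]; ring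
      have : F ≤ φ := by rw [hφdef, hx0]; linarith
      linarith
  obtain ⟨r, hr01, hrsum, hrb, hra⟩ :
      ∃ r : κ₂ → ℝ, (∀ k ∈ t₂, 0 ≤ r k ∧ r k ≤ 1) ∧ (∑ k ∈ t₂, μ k * r k = φ) ∧
      (∀ k ∈ t₂, 0 < μ k * r k →
        (ahat ≤ (((c + 1 - Z k 0 : ℤ) : ℝ) : EReal) ∧ (((c + 1 - Z k 0 : ℤ) : ℝ) : EReal) ≤ bhat) ∧ 0 < φ) ∧
      (∀ k ∈ t₂, 0 < μ k * (1 - r k) →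
        ahat ≤ (((c - Z k 0 : ℤ) : ℝ) : EReal) ∧ (((c - Z k 0 : ℤ) : ℝ) : EReal) ≤ bhat) := by
    have coe_mono : ∀ m m' : ℤ, m ≤ m' → (((m : ℤ) : ℝ) : EReal) ≤ (((m' : ℤ) : ℝ) : EReal) := by
      intro m m' h
      rw [EReal.coe_le_coe_iff]
      exact_mod_cast h
    rcases le_or_gt φ F with hcase | hcase
    · -- r k = if Z k 0 = p + 1 then φ / F else 0
      refine ⟨fun k => if Z k 0 = p + 1 then φ / F else 0, ?_, ?_, ?_, ?_⟩
      · intro k hk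
        by_cases h : Z k 0 = p + 1 <;> simp [h]
        constructor
        · exact div_nonneg hφ0 hF0
        · rcases hF0.eq_or_lt with hF | hF
          · rw [← hF]
            simp
          · exact div_le_one_of_le₀ hcase hF0
      · rw [← Finset.sum_filter_add_sum_filter_not t₂ (fun k => Z k 0 = p + 1)]
        have e2 : ∑ k ∈ t₂.filter (fun k => ¬ Z k 0 = p + 1), μ k * (if Z k 0 = p + 1 then φ / F else 0) = 0 := by
          refine Finset.sum_eq_zero fun k hk => ?_
          rw [if_neg (Finset.mem_filter.mp hk).2, mul_zero]
        have e1' : ∑ k ∈ t₂.filter (fun k => Z k 0 = p + 1), μ k * (if Z k 0 = p + 1 then φ / F else 0)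
            = (∑ k ∈ t₂.filter (fun k => Z k 0 = p + 1), μ k) * (φ / F) := by
          rw [Finset.sum_mul]
          exact Finset.sum_congr rfl fun k hk => by rw [if_pos (Finset.mem_filter.mp hk).2]
        rw [e1', e2, hG, add_zero]
        rcases hF0.eq_or_lt with hF | hF
        · have hφz : φ = 0 := le_antisymm (hcase.trans (le_of_eq hF.symm)) hφ0
          rw [hφz, ← hF]; simp
        · rw [mul_div_cancel₀ _ (ne_of_gt hF)]
      · intro k hk hpos
        by_cases h : Z k 0 = p + 1
        · replace hpos : 0 < μ k * (φ / F) := by simpa [h] using hpos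
          have hφpos : 0 < φ := by
            by_contra hφ
            push_neg at hφ
            have : φ / F ≤ 0 := div_nonpos_of_nonpos_of_nonneg hφ hF0
            nlinarith [hμ0 k hk]
          refine ⟨?_, hφpos⟩
          have : c + 1 - Z k 0 = c - p := by omega
          rw [this]
          exact ⟨feas_lo, feas_hi⟩
        · replace hpos : (0:ℝ) < 0 := by simpa [h] using hpos
          exact absurd hpos (lt_irrefl 0)
      · intro k hk hpos
        rcases hZ01 k hk with h | h
        · have : c - Z k 0 = c - p := by omega
          rw [this]
          exact ⟨feas_lo, feas_hi⟩
        · replace hpos : 0 < μ k * (1 - φ / F) := by simpa [h] using hpos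
          have hμpos : 0 < μ k ∧ 0 < 1 - φ / F := by
            rcases mul_pos_iff.mp hpos with ⟨h1, h2⟩ | ⟨h1, h2⟩
            · exact ⟨h1, h2⟩
            · exact absurd h1 (not_lt.mpr (hμ0 k hk))
          have hFpos : 0 < F := by
            rcases hF0.eq_or_lt with hF | hF
            · exfalso
              have hkf : k ∈ t₂.filter (fun k => Z k 0 = p + 1) := Finset.mem_filter.mpr ⟨hk, h⟩
              have : μ k ≤ ∑ j ∈ t₂.filter (fun k => Z k 0 = p + 1), μ j :=
                Finset.single_le_sum (fun j hj => hμ0 j (Finset.mem_filter.mp hj).1) hkf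
              rw [hG, ← hF] at this
              linarith [hμpos.1]
            · exact hF
          have hφF : φ < F := by
            have := hμpos.2
            rw [sub_pos] at this
            calc φ = (φ / F) * F := by rw [div_mul_cancel₀ _ (ne_of_gt hFpos)]
              _ < 1 * F := by exact mul_lt_mul_of_pos_right this hFpos
              _ = F := one_mul F
          have h1 : c - Z k 0 = c - 1 - p := by omega
          rw [h1]
          exact ⟨feas3 hφF, le_trans (coe_mono _ _ (by omega)) feas_hi⟩
    · -- case F < φ : r k = if Z k 0 = p + 1 then 1 else (φ - F) / (1 - F)
      have h1F : 0 < 1 - F := by linarith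
      have hq0 : 0 ≤ (φ - F) / (1 - F) := div_nonneg (by linarith) (le_of_lt h1F)
      have hq1 : (φ - F) / (1 - F) ≤ 1 := (div_le_one h1F).mpr (by linarith)
      have hqpos : 0 < (φ - F) / (1 - F) := div_pos (by linarith) h1F
      refine ⟨fun k => if Z k 0 = p + 1 then 1 else (φ - F) / (1 - F), ?_, ?_, ?_, ?_⟩
      · intro k hk
        by_cases h : Z k 0 = p + 1 <;> simp [h]
        · exact ⟨hq0, hq1⟩
      · rw [← Finset.sum_filter_add_sum_filter_not t₂ (fun k => Z k 0 = p + 1)]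
        have e1' : ∑ k ∈ t₂.filter (fun k => Z k 0 = p + 1), μ k * (if Z k 0 = p + 1 then (1:ℝ) else (φ - F) / (1 - F))
            = F := by
          rw [← hG]
          exact Finset.sum_congr rfl fun k hk => by rw [if_pos (Finset.mem_filter.mp hk).2, mul_one]
        have e2 : ∑ k ∈ t₂.filter (fun k => ¬ Z k 0 = p + 1), μ k * (if Z k 0 = p + 1 then (1:ℝ) else (φ - F) / (1 - F))
            = (1 - F) * ((φ - F) / (1 - F)) := by
          have hcompl : ∑ k ∈ t₂.filter (fun k => ¬ Z k 0 = p + 1), μ k = 1 - F := by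
            have := Finset.sum_filter_add_sum_filter_not t₂ (fun k => Z k 0 = p + 1) μ
            rw [hG] at this
            rw [hμ1] at this
            linarith
          rw [← hcompl, Finset.sum_mul]
          exact Finset.sum_congr rfl fun k hk => by rw [if_neg (Finset.mem_filter.mp hk).2]
        rw [e1', e2, mul_div_cancel₀ _ (ne_of_gt h1F)]
        ring
      · intro k hk hpos
        refine ⟨?_, by linarith⟩
        rcases hZ01 k hk with h | h
        · have h2 : c + 1 - Z k 0 = c + 1 - p := by omega
          rw [h2]
          exact ⟨le_trans feas_lo (coe_mono _ _ (by omega)), feas2 hcase⟩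
        · have h2 : c + 1 - Z k 0 = c - p := by omega
          rw [h2]
          exact ⟨feas_lo, feas_hi⟩
      · intro k hk hpos
        rcases hZ01 k hk with h | h
        · have h2 : c - Z k 0 = c - p := by omega
          rw [h2]
          exact ⟨feas_lo, feas_hi⟩
        · replace hpos : 0 < μ k * (1 - (1:ℝ)) := by simpa [h] using hpos
          simp at hpos
  set W : κ₂ × Bool → ℝ := fun q => if q.2 then μ q.1 * r q.1 else μ q.1 * (1 - r q.1) with hW
  set P : κ₂ × Bool → (Fin (n+1) → ℝ) :=
    fun q => embedZ (Z q.1 + ((if q.2 then c + 1 else c) - Z q.1 0) • e1) with hP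
  have hWnn : ∀ q ∈ t₂ ×ˢ (Finset.univ : Finset Bool), 0 ≤ W q := by
    rintro ⟨k, b⟩ hq
    have hk := (Finset.mem_product.mp hq).1
    obtain ⟨h0, h1⟩ := hr01 k hk
    cases b
    · simp only [hW]; exact mul_nonneg (hμ0 k hk) (by linarith)
    · simp only [hW]; exact mul_nonneg (hμ0 k hk) h0
  set A : Finset (κ₂ × Bool) := (t₂ ×ˢ Finset.univ).filter (fun q => 0 < W q) with hA
  have hsumfull : ∑ q ∈ t₂ ×ˢ (Finset.univ : Finset Bool), W q = 1 := by
    rw [Finset.sum_product]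
    have hb : ∀ k ∈ t₂, ∑ b : Bool, W (k, b) = μ k := by
      intro k hk
      rw [Fintype.sum_bool]
      simp only [hW]
      norm_num
      ring
    rw [Finset.sum_congr rfl hb, hμ1]
  have hsumA : ∑ q ∈ A, W q = 1 := by
    rw [hA, Finset.sum_filter_of_ne, hsumfull]
    intro q hq hne
    exact lt_of_le_of_ne (hWnn q hq) (Ne.symm hne)
  have hPval : ∀ (k : κ₂) (b : Bool) (i : Fin (n+1)), P (k, b) i
      = (Z k i : ℝ) + (((if b then (c:ℝ) + 1 else (c:ℝ))) - (Z k 0 : ℝ)) * (if i = 0 then 1 else 0) := by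
    intro k b i
    simp only [hP, embedZ, Pi.add_apply, Pi.smul_apply, he1, smul_eq_mul]
    push_cast [apply_ite]
    by_cases hi : i = 0 <;> cases b <;> simp [hi] <;> ring
  have hcm : A.centerMass W P = x := by
    rw [Finset.centerMass_eq_of_sum_1 _ _ hsumA]
    have hfull : ∑ q ∈ A, W q • P q = ∑ q ∈ t₂ ×ˢ (Finset.univ : Finset Bool), W q • P q := by
      rw [hA]
      apply Finset.sum_filter_of_ne
      intro q hq hne
      rcases (hWnn q hq).lt_or_eq with h | h
      · exact h
      · exact absurd (by rw [← h, zero_smul]) hne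
    rw [hfull]
    funext i
    rw [Finset.sum_apply, Finset.sum_product]
    by_cases hi : i = 0
    · subst hi
      have hterm : ∀ k ∈ t₂, ∑ b : Bool, (W (k, b) • P (k, b)) 0 = μ k * (c:ℝ) + μ k * r k := by
        intro k hk
        rw [Fintype.sum_bool]
        simp only [Pi.smul_apply, smul_eq_mul, hPval, hW]
        norm_num
        ring
      rw [Finset.sum_congr rfl hterm, Finset.sum_add_distrib, hrsum, ← Finset.sum_mul, hμ1, one_mul]
      rw [hφdef]; ring
    · have hterm : ∀ k ∈ t₂, ∑ b : Bool, (W (k, b) • P (k, b)) i = μ k * (Z k i : ℝ) := by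
        intro k hk
        rw [Fintype.sum_bool]
        simp only [Pi.smul_apply, smul_eq_mul, hPval, hW]
        simp [hi]
        ring
      rw [Finset.sum_congr rfl hterm, ← hx'k i, hxne i hi]
  have hmem : ∀ q ∈ A, P q ∈ embedZ '' ((S + {z : Fin (n + 1) → ℤ | ∃ t : ℤ,
        z = t • e1 ∧ ahat ≤ ((t : ℝ) : EReal) ∧ ((t : ℝ) : EReal) ≤ bhat}) ∩ IntNbhd x) := by
    rintro ⟨k, b⟩ hq
    obtain ⟨hq1, hq2⟩ := Finset.mem_filter.mp hq
    have hk : k ∈ t₂ := (Finset.mem_product.mp hq1).1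
    obtain ⟨hkS, hkN⟩ := (hZdef k hk).1
    have hfeas : (ahat ≤ ((((if b then c + 1 else c) - Z k 0 : ℤ):ℝ):EReal)
        ∧ ((((if b then c + 1 else c) - Z k 0 : ℤ):ℝ):EReal) ≤ bhat)
        ∧ |x 0 - (((if b then c + 1 else c) : ℤ):ℝ)| < 1 := by
      cases b
      · have hW' : 0 < μ k * (1 - r k) := by simpa [hW] using hq2
        refine ⟨by simpa using hra k hk hW', ?_⟩
        simp only [if_neg (by simp : ¬ false = true)]
        rw [abs_lt]; constructor <;> [skip; skip] <;> rw [hφdef] at hφ0 hφ1 <;> linarith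
      · have hW' : 0 < μ k * r k := by simpa [hW] using hq2
        obtain ⟨hf, hφp⟩ := hrb k hk hW'
        refine ⟨by simpa using hf, ?_⟩
        simp only [if_pos rfl]
        rw [abs_lt]
        push_cast
        rw [hφdef] at hφ1 hφp
        constructor <;> linarith
    refine ⟨Z k + ((if b then c + 1 else c) - Z k 0) • e1, ⟨?_, ?_⟩, rfl⟩
    · exact Set.mem_add.mpr ⟨Z k, hkS, _, ⟨_, rfl, hfeas.1.1, hfeas.1.2⟩, rfl⟩
    · intro i
      by_cases hi : i = 0
      · subst hi
        have hv : ((Z k + ((if b then c + 1 else c) - Z k 0) • e1) 0 : ℤ) = (if b then c + 1 else c) := by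
          cases b <;> simp [he1, Pi.add_apply, Pi.smul_apply]
        rw [hv]
        exact hfeas.2
      · have hv : ((Z k + ((if b then c + 1 else c) - Z k 0) • e1) i : ℤ) = Z k i := by
          cases b <;> simp [he1, Pi.add_apply, Pi.smul_apply, hi]
        rw [hv, hxne i hi]
        exact hkN i
  have hres := Finset.centerMass_mem_convexHull A
    (fun q hq => le_of_lt (Finset.mem_filter.mp hq).2) (by rw [hsumA]; norm_num) hmem
  rwa [hcm] at hres
end
end

section
/- Let g_k : ℤ^n → ℝ ∪ {+∞} (k = 1, 2, …) be a sequence of integrally convex functions converging pointwise to a function g : ℤ^n → ℝ ∪ {+∞} whose effective domain dom g = { x : g(x) < +∞ } is an integrally convex set. Then g is an integrally convex function. -/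
open scoped BigOperators

noncomputable section

variable {ι : Type*} [Fintype ι]

namespace ICLimitAux

open Filter Topology

variable {ι : Type*} [Fintype ι]

lemma coe_sum {β : Type*} (s : Finset β) (f : β → ℝ) :
    ((∑ z ∈ s, f z : ℝ) : EReal) = ∑ z ∈ s, ((f z : ℝ) : EReal) :=
  map_sum (⟨⟨Real.toEReal, EReal.coe_zero⟩, EReal.coe_add⟩ : ℝ →+ EReal) f s

lemma coe_min (r N : ℝ) : min ((r : ℝ) : EReal) ((N : ℝ) : EReal) = ((min r N : ℝ) : EReal) := by
  rcases le_total r N with h | h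
  · rw [min_eq_left h, min_eq_left (EReal.coe_le_coe_iff.2 h)]
  · rw [min_eq_right h, min_eq_right (EReal.coe_le_coe_iff.2 h)]

lemma intNbhd_finite (x : ι → ℝ) : (IntNbhd x).Finite := by
  apply Set.Finite.subset (Set.Finite.pi (fun i : ι => Set.finite_Icc (⌈x i - 1⌉) (⌊x i + 1⌋)))
  intro z hz
  simp only [Set.mem_pi, Set.mem_univ, Set.mem_Icc, forall_true_left]
  intro i
  have h := abs_lt.1 (hz i)
  exact ⟨Int.ceil_le.2 (by linarith), Int.le_floor.2 (by linarith)⟩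

lemma mul_ne_bot_of_nonneg {b : ℝ} (hb : 0 ≤ b) {B : EReal} (hB : B ≠ ⊥) : (b : EReal) * B ≠ ⊥ := by
  rcases eq_or_lt_of_le hb with h0 | h0
  · rw [← h0]; simp
  · induction B using EReal.rec with
    | bot => exact absurd rfl hB
    | coe r => rw [← EReal.coe_mul]; exact EReal.coe_ne_bot _
    | top => rw [EReal.coe_mul_top_of_pos h0]; simp

lemma sum_ne_bot {β : Type*} (s : Finset β) (f : β → EReal) (h : ∀ z ∈ s, f z ≠ ⊥) :
    (∑ z ∈ s, f z) ≠ ⊥ := by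
  induction s using Finset.cons_induction with
  | empty => simp
  | cons a s ha ih =>
      rw [Finset.sum_cons]
      simp only [ne_eq, EReal.add_eq_bot_iff, not_or]
      exact ⟨h a (Finset.mem_cons_self a s), ih fun z hz => h z (Finset.mem_cons.2 (Or.inr hz))⟩

lemma lce_le_of_mem (f : (ι → ℤ) → EReal) (x : ι → ℝ) (A : Finset (ι → ℤ))
    (lam : (ι → ℤ) → ℝ) (h1 : ∀ z ∈ A, z ∈ IntNbhd x) (h2 : ∀ z ∈ A, 0 ≤ lam z)
    (h3 : (∑ z ∈ A, lam z) = 1) (h4 : ∀ i, (∑ z ∈ A, lam z * (z i : ℝ)) = x i) :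
    LocalConvexExt f x ≤ ∑ z ∈ A, ((lam z : EReal) * f z) :=
  sInf_le ⟨A, lam, h1, h2, h3, h4, rfl⟩

lemma lce_lt {f : (ι → ℤ) → EReal} {x : ι → ℝ} {c : EReal} (h : LocalConvexExt f x < c) :
    ∃ (A : Finset (ι → ℤ)) (lam : (ι → ℤ) → ℝ),
      (∀ z ∈ A, z ∈ IntNbhd x) ∧ (∀ z ∈ A, 0 ≤ lam z) ∧ (∑ z ∈ A, lam z) = 1 ∧
      (∀ i, (∑ z ∈ A, lam z * (z i : ℝ)) = x i) ∧
      (∑ z ∈ A, ((lam z : EReal) * f z)) < c := by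
  obtain ⟨v, ⟨A, lam, h1, h2, h3, h4, hv⟩, hvc⟩ := sInf_lt_iff.1 h
  exact ⟨A, lam, h1, h2, h3, h4, hv ▸ hvc⟩

lemma le_lce {f : (ι → ℤ) → EReal} {x : ι → ℝ} {c : EReal}
    (h : ∀ (A : Finset (ι → ℤ)) (lam : (ι → ℤ) → ℝ),
      (∀ z ∈ A, z ∈ IntNbhd x) → (∀ z ∈ A, 0 ≤ lam z) → (∑ z ∈ A, lam z) = 1 →
      (∀ i, (∑ z ∈ A, lam z * (z i : ℝ)) = x i) →
      c ≤ ∑ z ∈ A, ((lam z : EReal) * f z)) :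
    c ≤ LocalConvexExt f x := by
  apply le_sInf
  rintro v ⟨A, lam, h1, h2, h3, h4, hv⟩
  rw [hv]
  exact h A lam h1 h2 h3 h4

lemma lce_ne_bot (f : (ι → ℤ) → EReal) (hf : ∀ z, f z ≠ ⊥) (x : ι → ℝ) :
    LocalConvexExt f x ≠ ⊥ := by
  classical
  set F := (intNbhd_finite x).toFinset with hF
  set M : ℝ := ∑ z ∈ F, min ((f z).toReal) 0 with hM
  have hle : (M : EReal) ≤ LocalConvexExt f x := by
    apply le_lce
    intro A lam h1 h2 h3 _
    have hsub : A ⊆ F := fun z hz => (intNbhd_finite x).mem_toFinset.2 (h1 z hz)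
    have hlam1 : ∀ z ∈ A, lam z ≤ 1 := by
      intro z hz
      calc lam z ≤ ∑ z ∈ A, lam z := Finset.single_le_sum h2 hz
      _ = 1 := h3
    have hterm : ∀ z ∈ A, ((min ((f z).toReal) 0 : ℝ) : EReal) ≤ (lam z : EReal) * f z := by
      intro z hz
      rcases eq_or_ne (f z) ⊤ with htop | htop
      · rw [htop]
        simp only [EReal.toReal_top, min_self, EReal.coe_zero]
        exact mul_nonneg (EReal.coe_nonneg.2 (h2 z hz)) le_top
      · set q := (f z).toReal with hqdef
        have hq : ((q : ℝ) : EReal) = f z := EReal.coe_toReal htop (hf z)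
        rw [← hq, ← EReal.coe_mul, EReal.coe_le_coe_iff]
        have ha := h2 z hz
        have hb := hlam1 z hz
        rcases le_total q 0 with h0 | h0
        · rw [min_eq_left h0]; nlinarith
        · rw [min_eq_right h0]; positivity
    calc (M : EReal) ≤ ((∑ z ∈ A, min ((f z).toReal) 0 : ℝ) : EReal) := by
          rw [EReal.coe_le_coe_iff, hM]
          have := Finset.sum_le_sum_of_subset_of_nonneg (f := fun z => -min ((f z).toReal) 0)
            hsub (fun z _ _ => by simp [min_le_right ((f z).toReal) 0])
          simp only [Finset.sum_neg_distrib] at this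
          linarith
    _ ≤ ∑ z ∈ A, ((lam z : EReal) * f z) := by
          rw [coe_sum]; exact Finset.sum_le_sum hterm
  intro hbot
  rw [hbot, le_bot_iff] at hle
  exact EReal.coe_ne_bot M hle

lemma eventually_lce_lt (gk : ℕ → (ι → ℤ) → EReal) (g : (ι → ℤ) → EReal)
    (hgbot : ∀ z, g z ≠ ⊥)
    (hlim : ∀ z, Filter.Tendsto (fun k => gk k z) Filter.atTop (nhds (g z)))
    (x : ι → ℝ) (c : ℝ) (h : LocalConvexExt g x < (c : EReal)) :
    ∀ᶠ k in Filter.atTop, LocalConvexExt (gk k) x < (c : EReal) := by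
  classical
  obtain ⟨A, lam, h1, h2, h3, h4, hv⟩ := lce_lt h
  have hnetop : ∀ z ∈ A, lam z ≠ 0 → g z ≠ ⊤ := by
    intro z hz hl htop
    rw [← Finset.add_sum_erase _ _ hz] at hv
    have hlpos : 0 < lam z := lt_of_le_of_ne (h2 z hz) (Ne.symm hl)
    rw [htop, EReal.coe_mul_top_of_pos hlpos, EReal.top_add_of_ne_bot] at hv
    · exact absurd hv (by simp)
    · exact sum_ne_bot _ _ fun w hw =>
        mul_ne_bot_of_nonneg (h2 w (Finset.mem_of_mem_erase hw)) (hgbot w)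
  set r : (ι → ℤ) → ℝ := fun z => (g z).toReal with hr
  have hterm_eq : ∀ z ∈ A, (lam z : EReal) * g z = ((lam z * r z : ℝ) : EReal) := by
    intro z hz
    by_cases hl : lam z = 0
    · simp [hl]
    · rw [← EReal.coe_toReal (hnetop z hz hl) (hgbot z), ← EReal.coe_mul]
  have hv' : ((∑ z ∈ A, lam z * r z : ℝ) : EReal) < (c : EReal) := by
    rw [coe_sum]
    calc ∑ z ∈ A, ((lam z * r z : ℝ) : EReal) = ∑ z ∈ A, ((lam z : EReal) * g z) :=
          (Finset.sum_congr rfl hterm_eq).symm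
    _ < (c : EReal) := hv
  rw [EReal.coe_lt_coe_iff] at hv'
  set s : ℝ := ∑ z ∈ A, lam z * r z with hs
  set δ : ℝ := (c - s) / 2 with hδdef
  have hδ : 0 < δ := by rw [hδdef]; linarith
  have hev : ∀ᶠ k in atTop, ∀ z ∈ A, lam z ≠ 0 → gk k z < ((r z + δ : ℝ) : EReal) := by
    rw [Finset.eventually_all]
    intro z hz
    by_cases hl : lam z = 0
    · exact Filter.Eventually.of_forall fun k hl' => absurd hl hl'
    · have hg : g z = ((r z : ℝ) : EReal) := (EReal.coe_toReal (hnetop z hz hl) (hgbot z)).symm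
      have hmem : Set.Iio ((r z + δ : ℝ) : EReal) ∈ nhds (g z) := by
        apply Iio_mem_nhds
        rw [hg]
        exact_mod_cast EReal.coe_lt_coe_iff.2 (by linarith)
      exact ((hlim z).eventually hmem).mono fun k hk _ => hk
  filter_upwards [hev] with k hkk
  calc LocalConvexExt (gk k) x ≤ ∑ z ∈ A, ((lam z : EReal) * gk k z) :=
        lce_le_of_mem _ _ _ _ h1 h2 h3 h4
  _ ≤ ((∑ z ∈ A, lam z * (r z + δ) : ℝ) : EReal) := by
        rw [coe_sum]
        apply Finset.sum_le_sum
        intro z hz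
        by_cases hl : lam z = 0
        · simp [hl]
        · rw [EReal.coe_mul]
          exact mul_le_mul_of_nonneg_left (hkk z hz hl).le (EReal.coe_nonneg.2 (h2 z hz))
  _ < (c : EReal) := by
        rw [EReal.coe_lt_coe_iff]
        have heq : ∑ z ∈ A, lam z * (r z + δ) = (∑ z ∈ A, lam z * r z) + (∑ z ∈ A, lam z) * δ := by
          rw [Finset.sum_mul, ← Finset.sum_add_distrib]
          exact Finset.sum_congr rfl fun z _ => by ring
        rw [heq, h3, ← hs, hδdef]; linarith

lemma clamp_term_le {l : ℝ} (hl : 0 ≤ l) {v : EReal} (hv : v ≠ ⊥) (N : ℝ) :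
    ((l * (min v ((N:ℝ):EReal)).toReal : ℝ) : EReal) ≤ (l : EReal) * v := by
  have hmt : min v ((N : ℝ) : EReal) ≠ ⊤ := ((min_le_right _ _).trans_lt (EReal.coe_lt_top N)).ne
  have hmb : min v ((N : ℝ) : EReal) ≠ ⊥ := (lt_min (Ne.bot_lt hv) (EReal.bot_lt_coe N)).ne'
  rw [EReal.coe_mul, EReal.coe_toReal hmt hmb]
  exact mul_le_mul_of_nonneg_left (min_le_left _ _) (EReal.coe_nonneg.2 hl)

lemma clamp_tendsto {u : ℕ → EReal} {L : EReal} (hL : L ≠ ⊥) (h : Tendsto u atTop (𝓝 L)) (N : ℝ) :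
    Tendsto (fun k => (min (u k) ((N : ℝ) : EReal)).toReal) atTop (𝓝 ((min L ((N:ℝ):EReal)).toReal)) := by
  have h1 : Tendsto (fun k => min (u k) ((N:ℝ):EReal)) atTop (𝓝 (min L ((N:ℝ):EReal))) :=
    h.min tendsto_const_nhds
  exact (EReal.tendsto_toReal ((min_le_right _ _).trans_lt (EReal.coe_lt_top N)).ne
    ((lt_min (Ne.bot_lt hL) (EReal.bot_lt_coe N)).ne')).comp h1

lemma lce_le_of_eventually_lt (gk : ℕ → (ι → ℤ) → EReal) (g : (ι → ℤ) → EReal)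
    (hkbot : ∀ k z, gk k z ≠ ⊥) (hgbot : ∀ z, g z ≠ ⊥)
    (hlim : ∀ z, Filter.Tendsto (fun k => gk k z) Filter.atTop (nhds (g z)))
    (w : ι → ℝ) (c : ℝ)
    (h : ∀ᶠ k in Filter.atTop, LocalConvexExt (gk k) w < (c : EReal)) :
    LocalConvexExt g w ≤ (c : EReal) := by
  classical
  obtain ⟨K, hK⟩ := Filter.eventually_atTop.1 h
  set F : Finset (ι → ℤ) := (intNbhd_finite w).toFinset with hFdef
  have hFmem : ∀ z ∈ F, z ∈ IntNbhd w := fun z hz => (intNbhd_finite w).mem_toFinset.1 hz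
  have key : ∀ j : ℕ, ∃ lam : (ι → ℤ) → ℝ, (∀ z, 0 ≤ lam z) ∧
      (∑ z ∈ F, lam z) = 1 ∧ (∀ i, (∑ z ∈ F, lam z * (z i : ℝ)) = w i) ∧
      (∑ z ∈ F, ((lam z : EReal) * gk (K + j) z)) < (c : EReal) := by
    intro j
    obtain ⟨A, lam0, h1, h2, h3, h4, hv⟩ := lce_lt (hK (K + j) (Nat.le_add_right K j))
    have hsub : A ⊆ F := fun z hz => (intNbhd_finite w).mem_toFinset.2 (h1 z hz)
    refine ⟨fun z => if z ∈ A then lam0 z else 0, ?_, ?_, ?_, ?_⟩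
    · intro z
      by_cases hz : z ∈ A
      · simpa [hz] using h2 z hz
      · simp [hz]
    · rw [Finset.sum_ite_mem, Finset.inter_eq_right.2 hsub]; exact h3
    · intro i
      have hcong : ∀ z ∈ F, (if z ∈ A then lam0 z else 0) * (z i : ℝ)
          = (if z ∈ A then lam0 z * (z i : ℝ) else 0) := by
        intro z _; by_cases hz : z ∈ A <;> simp [hz]
      rw [Finset.sum_congr rfl hcong, Finset.sum_ite_mem, Finset.inter_eq_right.2 hsub]
      exact h4 i
    · have hcong : ∀ z ∈ F, (((if z ∈ A then lam0 z else 0 : ℝ)) : EReal) * gk (K + j) z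
          = (if z ∈ A then (lam0 z : EReal) * gk (K + j) z else 0) := by
        intro z _; by_cases hz : z ∈ A <;> simp [hz]
      rw [Finset.sum_congr rfl hcong, Finset.sum_ite_mem, Finset.inter_eq_right.2 hsub]
      exact hv
  choose lam hnn hsum hbar hval using key
  set seq : ℕ → (↥F → ℝ) := fun j t => lam j ↑t with hseq
  have hseqmem : ∀ j, seq j ∈ Set.Icc (0 : ↥F → ℝ) 1 := by
    intro j
    constructor
    · intro t; exact hnn j ↑t
    · intro t
      calc lam j ↑t ≤ ∑ z ∈ F, lam j z := Finset.single_le_sum (fun z _ => hnn j z) t.2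
      _ = 1 := hsum j
  obtain ⟨μ, hμIcc, φ, hφmono, hφtend⟩ :=
    (isCompact_Icc (a := (0 : ↥F → ℝ)) (b := 1)).tendsto_subseq hseqmem
  have hμ0 : ∀ t : ↥F, 0 ≤ μ t := fun t => hμIcc.1 t
  have hμ1 : ∀ t : ↥F, μ t ≤ 1 := fun t => hμIcc.2 t
  have hcomp : ∀ t : ↥F, Tendsto (fun j => lam (φ j) ↑t) atTop (𝓝 (μ t)) := fun t =>
    (tendsto_pi_nhds.1 hφtend) t
  set lamstar : (ι → ℤ) → ℝ := fun z => if hz : z ∈ F then μ ⟨z, hz⟩ else 0 with hlamstar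
  have hls : ∀ t : ↥F, lamstar ↑t = μ t := by
    intro t; rw [hlamstar]; exact dif_pos t.2
  have hKφ : Tendsto (fun j => K + φ j) atTop atTop :=
    tendsto_atTop_mono (fun j => Nat.le_add_left (φ j) K) hφmono.tendsto_atTop
  have hsum' : (∑ t ∈ F.attach, μ t) = 1 := by
    apply tendsto_nhds_unique (tendsto_finset_sum _ (fun t _ => hcomp t))
    have hconst : (fun j => ∑ t ∈ F.attach, lam (φ j) ↑t) = fun _ => (1:ℝ) := by
      funext j; rw [Finset.sum_attach F (lam (φ j))]; exact hsum (φ j)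
    rw [hconst]; exact tendsto_const_nhds
  have hbar' : ∀ i, (∑ t ∈ F.attach, μ t * ((t : ι → ℤ) i : ℝ)) = w i := by
    intro i
    apply tendsto_nhds_unique (tendsto_finset_sum _ (fun t _ => (hcomp t).mul_const _))
    have hconst : (fun j => ∑ t ∈ F.attach, lam (φ j) ↑t * ((t : ι → ℤ) i : ℝ)) = fun _ => w i := by
      funext j; rw [Finset.sum_attach F (fun z => lam (φ j) z * (z i : ℝ))]; exact hbar (φ j) i
    rw [hconst]; exact tendsto_const_nhds
  have QN : ∀ N : ℝ, (∑ t ∈ F.attach, μ t * (min (g ↑t) ((N:ℝ):EReal)).toReal) ≤ c := by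
    intro N
    apply le_of_tendsto (tendsto_finset_sum _ (fun t _ =>
      (hcomp t).mul (clamp_tendsto (hgbot ↑t) ((hlim ↑t).comp hKφ) N)))
    filter_upwards with j
    have hE : ((∑ t ∈ F.attach, lam (φ j) ↑t * (min (gk (K + φ j) ↑t) ((N:ℝ):EReal)).toReal : ℝ) : EReal)
        ≤ (c : EReal) := by
      rw [coe_sum]
      calc ∑ t ∈ F.attach, ((lam (φ j) ↑t * (min (gk (K + φ j) ↑t) ((N:ℝ):EReal)).toReal : ℝ) : EReal)
          ≤ ∑ t ∈ F.attach, ((lam (φ j) ↑t : ℝ) : EReal) * gk (K + φ j) ↑t :=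
            Finset.sum_le_sum fun t _ => clamp_term_le (hnn (φ j) ↑t) (hkbot _ _) N
      _ = ∑ z ∈ F, ((lam (φ j) z : ℝ) : EReal) * gk (K + φ j) z :=
            Finset.sum_attach F (fun z => ((lam (φ j) z : ℝ) : EReal) * gk (K + φ j) z)
      _ ≤ (c : EReal) := (hval (φ j)).le
    exact_mod_cast hE
  have hgoal_eq : (∑ z ∈ F, ((lamstar z : EReal) * g z))
      = ∑ t ∈ F.attach, ((μ t : ℝ) : EReal) * g ↑t := by
    rw [← Finset.sum_attach F (fun z => ((lamstar z : EReal) * g z))]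
    exact Finset.sum_congr rfl fun t _ => by rw [hls t]
  have hmain : (∑ z ∈ F, ((lamstar z : EReal) * g z)) ≤ (c : EReal) := by
    rw [hgoal_eq]
    by_cases hT : ∀ t : ↥F, g ↑t = ⊤ → μ t = 0
    · set N : ℝ := ∑ t ∈ F.attach, |(g ↑t).toReal| with hNdef
      have hNt : ∀ t : ↥F, (g (↑t : ι → ℤ)).toReal ≤ N := fun t =>
        (le_abs_self _).trans (Finset.single_le_sum (f := fun t : ↥F => |(g (↑t : ι → ℤ)).toReal|)
          (fun s _ => abs_nonneg _) (Finset.mem_attach _ t))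
      have heq : (∑ t ∈ F.attach, ((μ t : ℝ) : EReal) * g ↑t)
          = ((∑ t ∈ F.attach, μ t * (min (g ↑t) ((N:ℝ):EReal)).toReal : ℝ) : EReal) := by
        rw [coe_sum]
        apply Finset.sum_congr rfl
        intro t _
        by_cases hgt : g ↑t = ⊤
        · rw [hT t hgt, hgt]; simp
        · have hgr : ((g (↑t : ι → ℤ)).toReal : EReal) = g ↑t := EReal.coe_toReal hgt (hgbot ↑t)
          have hmin : min (g ↑t) ((N:ℝ):EReal) = g ↑t :=
            min_eq_left (by rw [← hgr]; exact EReal.coe_le_coe_iff.2 (hNt t))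
          rw [hmin, EReal.coe_mul, hgr]
      rw [heq]
      exact EReal.coe_le_coe_iff.2 (QN N)
    · push_neg at hT
      obtain ⟨t0, hgt0, hμt0⟩ := hT
      have hδ : 0 < μ t0 := lt_of_le_of_ne (hμ0 t0) (Ne.symm hμt0)
      exfalso
      set M : ℝ := ∑ t ∈ F.attach, |(g ↑t).toReal| with hMdef
      have hM0 : 0 ≤ M := Finset.sum_nonneg fun t _ => abs_nonneg _
      set N : ℝ := (|c| + M + 1) / μ t0 with hNdef
      have hN0 : 0 ≤ N := by positivity
      have hlow : μ t0 * N - M ≤ ∑ t ∈ F.attach, μ t * (min (g ↑t) ((N:ℝ):EReal)).toReal := by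
        rw [← Finset.add_sum_erase _ _ (Finset.mem_attach F t0)]
        have ht0val : μ t0 * (min (g ↑t0) ((N:ℝ):EReal)).toReal = μ t0 * N := by
          rw [hgt0, min_eq_right le_top, EReal.toReal_coe]
        rw [ht0val]
        have h1 : ∑ t ∈ (F.attach.erase t0), -|(g (↑t : ι → ℤ)).toReal| ≤
            ∑ t ∈ (F.attach.erase t0), μ t * (min (g ↑t) ((N:ℝ):EReal)).toReal := by
          apply Finset.sum_le_sum
          intro t _
          by_cases hgt : g ↑t = ⊤
          · rw [hgt, min_eq_right le_top, EReal.toReal_coe, EReal.toReal_top, abs_zero, neg_zero]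
            exact mul_nonneg (hμ0 t) hN0
          · have hgr : ((g (↑t : ι → ℤ)).toReal : EReal) = g ↑t := EReal.coe_toReal hgt (hgbot ↑t)
            set r : ℝ := (g (↑t : ι → ℤ)).toReal with hrdef
            have hmin : min (g ↑t) ((N:ℝ):EReal) = ((min r N : ℝ) : EReal) := by
              rw [← hgr, coe_min]
            rw [hmin, EReal.toReal_coe]
            have hminr : -|r| ≤ min r N :=
              le_min (neg_abs_le r) (le_trans (neg_nonpos_of_nonneg (abs_nonneg r)) hN0)
            nlinarith [mul_nonneg (hμ0 t) (by linarith : (0:ℝ) ≤ min r N + |r|),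
              mul_nonneg (by linarith [hμ1 t] : (0:ℝ) ≤ 1 - μ t) (abs_nonneg r)]
        have h2 : -M ≤ ∑ t ∈ (F.attach.erase t0), -|(g (↑t : ι → ℤ)).toReal| := by
          rw [Finset.sum_neg_distrib, neg_le_neg_iff]
          exact Finset.sum_le_sum_of_subset_of_nonneg (Finset.erase_subset _ _)
            (fun t _ _ => abs_nonneg _)
        linarith
      have hup := QN N
      have hδN : μ t0 * N = |c| + M + 1 := by
        rw [hNdef]; field_simp
      linarith [le_abs_self c]
  have hfs1 : (∑ z ∈ F, lamstar z) = 1 := by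
    rw [← Finset.sum_attach F lamstar, Finset.sum_congr rfl (fun t _ => hls t)]; exact hsum'
  have hfs2 : ∀ i, (∑ z ∈ F, lamstar z * (z i : ℝ)) = w i := by
    intro i
    rw [← Finset.sum_attach F (fun z => lamstar z * (z i : ℝ)),
      Finset.sum_congr rfl (fun t _ => by rw [hls t])]
    exact hbar' i
  have hfs0 : ∀ z ∈ F, 0 ≤ lamstar z := by
    intro z hz
    rw [hlamstar]
    simp only [dif_pos hz]
    exact hμ0 ⟨z, hz⟩
  calc LocalConvexExt g w ≤ ∑ z ∈ F, ((lamstar z : EReal) * g z) :=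
        lce_le_of_mem g w F lamstar hFmem hfs0 hfs1 hfs2
  _ ≤ (c : EReal) := hmain

end ICLimitAux


/-- A pointwise limit of integrally convex functions whose
effective domain is an integrally convex set is integrally convex. -/
theorem pointwise_limit_integrally_convex (n : ℕ)
    (gk : ℕ → (Fin n → ℤ) → EReal)
    (hkbot : ∀ k x, gk k x ≠ ⊥)
    (hk : ∀ k, IntegrallyConvexFn (gk k))
    (g : (Fin n → ℤ) → EReal)
    (hgbot : ∀ x, g x ≠ ⊥)
    (hlim : ∀ x, Filter.Tendsto (fun k => gk k x) Filter.atTop (nhds (g x)))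
    (hdom : IntegrallyConvexSet {x | g x ≠ ⊤}) :
    IntegrallyConvexFn g := by
  intro x y a b ha hb hab
  rcases eq_or_lt_of_le ha with ha0 | ha0
  · have hb1 : b = 1 := by linarith
    subst hb1
    rw [← ha0]
    simp
  rcases eq_or_lt_of_le hb with hb0 | hb0
  · have ha1 : a = 1 := by linarith
    subst ha1
    rw [← hb0]
    simp
  have hAbot := ICLimitAux.lce_ne_bot g hgbot x
  have hBbot := ICLimitAux.lce_ne_bot g hgbot y
  by_cases hAtop : LocalConvexExt g x = ⊤
  · rw [hAtop, EReal.coe_mul_top_of_pos ha0,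
      EReal.top_add_of_ne_bot (ICLimitAux.mul_ne_bot_of_nonneg hb hBbot)]
    exact le_top
  by_cases hBtop : LocalConvexExt g y = ⊤
  · rw [hBtop, EReal.coe_mul_top_of_pos hb0,
      EReal.add_top_of_ne_bot (ICLimitAux.mul_ne_bot_of_nonneg ha hAbot)]
    exact le_top
  set α : ℝ := (LocalConvexExt g x).toReal with hα
  set β : ℝ := (LocalConvexExt g y).toReal with hβ
  have hA : ((α : ℝ) : EReal) = LocalConvexExt g x := EReal.coe_toReal hAtop hAbot
  have hB : ((β : ℝ) : EReal) = LocalConvexExt g y := EReal.coe_toReal hBtop hBbot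
  have main : ∀ ε : ℝ, 0 < ε →
      LocalConvexExt g (a • x + b • y) ≤ ((a * α + b * β + ε : ℝ) : EReal) := by
    intro ε hε
    have hx' : LocalConvexExt g x < ((α + ε / 2 : ℝ) : EReal) := by
      rw [← hA]; exact EReal.coe_lt_coe_iff.2 (by linarith)
    have hy' : LocalConvexExt g y < ((β + ε / 2 : ℝ) : EReal) := by
      rw [← hB]; exact EReal.coe_lt_coe_iff.2 (by linarith)
    have hevx := ICLimitAux.eventually_lce_lt gk g hgbot hlim x (α + ε / 2) hx'
    have hevy := ICLimitAux.eventually_lce_lt gk g hgbot hlim y (β + ε / 2) hy'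
    have hevw : ∀ᶠ k in Filter.atTop,
        LocalConvexExt (gk k) (a • x + b • y) < ((a * α + b * β + ε : ℝ) : EReal) := by
      filter_upwards [hevx, hevy] with k hkx hky
      calc LocalConvexExt (gk k) (a • x + b • y)
          ≤ (a : EReal) * LocalConvexExt (gk k) x + (b : EReal) * LocalConvexExt (gk k) y :=
            hk k x y a b ha hb hab
      _ ≤ (a : EReal) * ((α + ε / 2 : ℝ) : EReal) + (b : EReal) * ((β + ε / 2 : ℝ) : EReal) :=
            add_le_add (mul_le_mul_of_nonneg_left hkx.le (EReal.coe_nonneg.2 ha))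
              (mul_le_mul_of_nonneg_left hky.le (EReal.coe_nonneg.2 hb))
      _ = ((a * (α + ε / 2) + b * (β + ε / 2) : ℝ) : EReal) := by
            rw [← EReal.coe_mul, ← EReal.coe_mul, ← EReal.coe_add]
      _ < ((a * α + b * β + ε : ℝ) : EReal) := by
            rw [EReal.coe_lt_coe_iff]
            have h3 : a * (ε / 2) + b * (ε / 2) = ε / 2 := by
              rw [← add_mul, hab, one_mul]
            nlinarith [h3]
    exact ICLimitAux.lce_le_of_eventually_lt gk g hkbot hgbot hlim _ _ hevw
  rw [← hA, ← hB, ← EReal.coe_mul, ← EReal.coe_mul, ← EReal.coe_add]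
  rcases eq_or_ne (LocalConvexExt g (a • x + b • y)) ⊥ with hWb | hWb
  · rw [hWb]; exact bot_le
  · have hWt : LocalConvexExt g (a • x + b • y) ≠ ⊤ := by
      intro htop
      have h1 := main 1 one_pos
      rw [htop] at h1
      exact absurd h1 (not_le.2 (EReal.coe_lt_top _))
    have hWr : (((LocalConvexExt g (a • x + b • y)).toReal : ℝ) : EReal)
        = LocalConvexExt g (a • x + b • y) := EReal.coe_toReal hWt hWb
    rw [← hWr, EReal.coe_le_coe_iff]
    apply le_of_forall_pos_le_add
    intro ε hε
    have h2 := main ε hε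
    rw [← hWr] at h2
    have h3 := EReal.coe_le_coe_iff.1 h2
    linarith
end
end

section
/- The sets S₁ = {(0,0), (1,1)} and S₂ = {(1,0), (0,1)} in ℤ² are integrally convex, their Minkowski sum is S₁ + S₂ = {(1,0), (0,1), (2,1), (1,2)}, and S₁ + S₂ is not integrally convex: the point (1,1) lies in the convex hull of S₁ + S₂ but (1,1) ∉ S₁ + S₂, while (1,1) ∈ ℤ². In particular, the Minkowski sum of two integrally convex sets need not be integrally convex. -/
open scoped BigOperators Pointwise

noncomputable section

variable {ι : Type*} [Fintype ι]

set_option linter.unusedSectionVars false in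
lemma pair_IC (a b : ι → ℤ) (h : ∀ i, |a i - b i| ≤ 1) :
    IntegrallyConvexSet ({a, b} : Set (ι → ℤ)) := by
  intro x hx
  rw [Set.image_pair, convexHull_pair] at hx
  obtain ⟨u, v, hu, hv, huv, hx⟩ := hx
  rcases eq_or_lt_of_le hu with hu0 | hu0
  · -- u = 0, x = embedZ b
    have hv1 : v = 1 := by linarith
    have hxb : x = embedZ b := by rw [← hx, ← hu0, hv1]; simp
    have : b ∈ ({a, b} : Set (ι → ℤ)) ∩ IntNbhd x := by
      refine ⟨Or.inr rfl, fun i => ?_⟩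
      rw [hxb]; simp [embedZ]
    exact subset_convexHull ℝ _ ⟨b, this, hxb.symm⟩
  rcases eq_or_lt_of_le hv with hv0 | hv0
  · have hu1 : u = 1 := by linarith
    have hxa : x = embedZ a := by rw [← hx, ← hv0, hu1]; simp
    have : a ∈ ({a, b} : Set (ι → ℤ)) ∩ IntNbhd x := by
      refine ⟨Or.inl rfl, fun i => ?_⟩
      rw [hxa]; simp [embedZ]
    exact subset_convexHull ℝ _ ⟨a, this, hxa.symm⟩
  -- both positive
  have hv1 : v < 1 := by linarith
  have hu1 : u < 1 := by linarith
  have hab : ∀ i, |(a i : ℝ) - (b i : ℝ)| ≤ 1 := by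
    intro i
    have := h i
    have : (|a i - b i| : ℝ) ≤ 1 := by exact_mod_cast this
    simpa using this
  have haN : a ∈ IntNbhd x := by
    intro i
    have : x i - (a i : ℝ) = v * ((b i : ℝ) - (a i : ℝ)) := by
      rw [← hx]; simp only [Pi.add_apply, Pi.smul_apply, smul_eq_mul, embedZ]
      linear_combination ((a i : ℝ)) * huv
    rw [this, abs_mul, abs_of_nonneg hv]
    calc v * |(b i : ℝ) - (a i : ℝ)| ≤ v * 1 := by
          have := hab i; rw [abs_sub_comm] at this
          exact mul_le_mul_of_nonneg_left this hv
      _ < 1 := by linarith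
  have hbN : b ∈ IntNbhd x := by
    intro i
    have : x i - (b i : ℝ) = u * ((a i : ℝ) - (b i : ℝ)) := by
      rw [← hx]; simp only [Pi.add_apply, Pi.smul_apply, smul_eq_mul, embedZ]
      linear_combination ((b i : ℝ)) * huv
    rw [this, abs_mul, abs_of_nonneg hu]
    calc u * |(a i : ℝ) - (b i : ℝ)| ≤ u * 1 :=
          mul_le_mul_of_nonneg_left (hab i) hu
      _ < 1 := by linarith
  have hsub : ({a, b} : Set (ι → ℤ)) ∩ IntNbhd x = {a, b} := by
    apply Set.inter_eq_left.mpr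
    rintro z (rfl | rfl)
    exacts [haN, hbN]
  rw [hsub, Set.image_pair, convexHull_pair]
  exact ⟨u, v, hu, hv, huv, hx⟩

lemma sum_eq :
    ({![0,0], ![1,1]} : Set (Fin 2 → ℤ)) + ({![1,0], ![0,1]} : Set (Fin 2 → ℤ)) =
      ({![1,0], ![0,1], ![2,1], ![1,2]} : Set (Fin 2 → ℤ)) := by
  ext x
  simp only [Set.mem_add, Set.mem_insert_iff, Set.mem_singleton_iff]
  constructor
  · rintro ⟨y, (rfl|rfl), z, (rfl|rfl), rfl⟩ <;>
      simp [← List.ofFn_inj]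
  · rintro (rfl|rfl|rfl|rfl)
    · exact ⟨![0,0], Or.inl rfl, ![1,0], Or.inl rfl, by simp [← List.ofFn_inj]⟩
    · exact ⟨![0,0], Or.inl rfl, ![0,1], Or.inr rfl, by simp [← List.ofFn_inj]⟩
    · exact ⟨![1,1], Or.inr rfl, ![1,0], Or.inl rfl, by simp [← List.ofFn_inj]⟩
    · exact ⟨![1,1], Or.inr rfl, ![0,1], Or.inr rfl, by simp [← List.ofFn_inj]⟩

lemma mem_hull :
    embedZ ![1,1] ∈ convexHull ℝ
      (embedZ '' ({![1,0], ![0,1], ![2,1], ![1,2]} : Set (Fin 2 → ℤ))) := by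
  have h : embedZ ![1,1] =
      (1/2 : ℝ) • embedZ ![1,0] + (1/2 : ℝ) • embedZ ![1,2] := by
    funext i
    fin_cases i
    · show ((![1,1] 0 : ℤ) : ℝ) = (1/2:ℝ) * ((![1,0] 0 : ℤ):ℝ) + (1/2:ℝ) * ((![1,2] 0 : ℤ):ℝ)
      norm_num
    · show ((![1,1] 1 : ℤ) : ℝ) = (1/2:ℝ) * ((![1,0] 1 : ℤ):ℝ) + (1/2:ℝ) * ((![1,2] 1 : ℤ):ℝ)
      norm_num
  have h1 : embedZ ![1,0] ∈ convexHull ℝ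
      (embedZ '' ({![1,0], ![0,1], ![2,1], ![1,2]} : Set (Fin 2 → ℤ))) :=
    subset_convexHull ℝ _ ⟨![1,0], by simp, rfl⟩
  have h2 : embedZ ![1,2] ∈ convexHull ℝ
      (embedZ '' ({![1,0], ![0,1], ![2,1], ![1,2]} : Set (Fin 2 → ℤ))) :=
    subset_convexHull ℝ _ ⟨![1,2], by simp, rfl⟩
  rw [h]
  exact (convex_convexHull ℝ _) h1 h2 (by norm_num) (by norm_num) (by norm_num)

lemma not_mem_sum : ![1,1] ∉ ({![1,0], ![0,1], ![2,1], ![1,2]} : Set (Fin 2 → ℤ)) := by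
  simp [← List.ofFn_inj]

lemma nbhd_one : ∀ z : Fin 2 → ℤ, z ∈ IntNbhd (embedZ (![1,1] : Fin 2 → ℤ)) → z = ![1,1] := by
  intro z hz
  funext i
  have h := hz i
  have hv : embedZ (![1,1] : Fin 2 → ℤ) i = 1 := by fin_cases i <;> simp [embedZ]
  rw [hv] at h
  rw [abs_lt] at h
  have h1 : (0:ℝ) < (z i : ℝ) := by linarith
  have h2 : (z i : ℝ) < 2 := by linarith
  have hlo : (0:ℤ) < z i := by exact_mod_cast h1
  have hhi : z i < 2 := by exact_mod_cast h2
  fin_cases i <;> simp_all <;> omega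

lemma not_IC : ¬ IntegrallyConvexSet ({![1,0], ![0,1], ![2,1], ![1,2]} : Set (Fin 2 → ℤ)) := by
  intro h
  have hm := h _ mem_hull
  have hempty : ({![1,0], ![0,1], ![2,1], ![1,2]} : Set (Fin 2 → ℤ)) ∩
      IntNbhd (embedZ ![1,1]) = ∅ := by
    ext z
    simp only [Set.mem_inter_iff, Set.mem_empty_iff_false, iff_false, not_and]
    intro hzS hzN
    exact not_mem_sum (nbhd_one z hzN ▸ hzS)
  rw [hempty] at hm
  simp at hm


/-- `S₁ = {(0,0),(1,1)}` and `S₂ = {(1,0),(0,1)}` are integrally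
convex, `S₁ + S₂ = {(1,0),(0,1),(2,1),(1,2)}` has a hole at `(1,1)`, and
`S₁ + S₂` is not integrally convex. -/
theorem minkowski_sum_not_integrally_convex :
    IntegrallyConvexSet ({![0,0], ![1,1]} : Set (Fin 2 → ℤ)) ∧
    IntegrallyConvexSet ({![1,0], ![0,1]} : Set (Fin 2 → ℤ)) ∧
    ({![0,0], ![1,1]} : Set (Fin 2 → ℤ)) + ({![1,0], ![0,1]} : Set (Fin 2 → ℤ)) =
      ({![1,0], ![0,1], ![2,1], ![1,2]} : Set (Fin 2 → ℤ)) ∧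
    embedZ ![1,1] ∈ convexHull ℝ
      (embedZ '' (({![0,0], ![1,1]} : Set (Fin 2 → ℤ)) + ({![1,0], ![0,1]} : Set (Fin 2 → ℤ)))) ∧
    ![1,1] ∉ (({![0,0], ![1,1]} : Set (Fin 2 → ℤ)) + ({![1,0], ![0,1]} : Set (Fin 2 → ℤ))) ∧
    ¬ IntegrallyConvexSet
      (({![0,0], ![1,1]} : Set (Fin 2 → ℤ)) + ({![1,0], ![0,1]} : Set (Fin 2 → ℤ))) := by
  refine ⟨?_, ?_, sum_eq, ?_, ?_, ?_⟩
  · exact pair_IC _ _ (by intro i; fin_cases i <;> simp)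
  · exact pair_IC _ _ (by intro i; fin_cases i <;> simp)
  · rw [sum_eq]; exact mem_hull
  · rw [sum_eq]; exact not_mem_sum
  · rw [sum_eq]; exact not_IC
end
end

section
/- The set S = {(0,0,1), (1,1,0)} ⊆ ℤ³ is discrete midpoint convex and B = {(0,0,0), (1,0,0)} is an integer interval, but their Minkowski sum S + B = {(0,0,1), (1,1,0), (1,0,1), (2,1,0)} is not discrete midpoint convex: for x = (0,0,1) and y = (2,1,0) in S + B, ‖x − y‖∞ = 2, ⌈(x+y)/2⌉ = (1,1,1) ∉ S + B, and ⌊(x+y)/2⌋ = (1,0,0) ∉ S + B. -/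
open scoped BigOperators Pointwise

noncomputable section

variable {ι : Type*} [Fintype ι]

/-- `S = {(0,0,1),(1,1,0)}` is discrete midpoint convex and
`B = {(0,0,0),(1,0,0)}` is an integer interval, but `S + B` is not discrete
midpoint convex. -/
theorem minkowski_sum_not_dmc :
    DiscreteMidpointConvexSet ({![0,0,1], ![1,1,0]} : Set (Fin 3 → ℤ)) ∧
    IsIntegerInterval ({![0,0,0], ![1,0,0]} : Set (Fin 3 → ℤ)) ∧
    ({![0,0,1], ![1,1,0]} : Set (Fin 3 → ℤ)) + ({![0,0,0], ![1,0,0]} : Set (Fin 3 → ℤ)) =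
      ({![0,0,1], ![1,1,0], ![1,0,1], ![2,1,0]} : Set (Fin 3 → ℤ)) ∧
    (∀ i, |(![0,0,1] : Fin 3 → ℤ) i - (![2,1,0] : Fin 3 → ℤ) i| ≤ 2) ∧
    (∃ i, |(![0,0,1] : Fin 3 → ℤ) i - (![2,1,0] : Fin 3 → ℤ) i| = 2) ∧
    midUp (![0,0,1] : Fin 3 → ℤ) ![2,1,0] = ![1,1,1] ∧
    midDown (![0,0,1] : Fin 3 → ℤ) ![2,1,0] = ![1,0,0] ∧
    (![1,1,1] : Fin 3 → ℤ) ∉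
      (({![0,0,1], ![1,1,0]} : Set (Fin 3 → ℤ)) + ({![0,0,0], ![1,0,0]} : Set (Fin 3 → ℤ))) ∧
    (![1,0,0] : Fin 3 → ℤ) ∉
      (({![0,0,1], ![1,1,0]} : Set (Fin 3 → ℤ)) + ({![0,0,0], ![1,0,0]} : Set (Fin 3 → ℤ))) ∧
    ¬ DiscreteMidpointConvexSet
      (({![0,0,1], ![1,1,0]} : Set (Fin 3 → ℤ)) + ({![0,0,0], ![1,0,0]} : Set (Fin 3 → ℤ))) := by
  have hcast : ∀ p q : ℤ, ((((p : ℝ)) : EReal) ≤ (((q : ℝ)) : EReal)) ↔ p ≤ q := by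
    intro p q
    rw [EReal.coe_le_coe_iff, Int.cast_le]
  have hsum : ({![0,0,1], ![1,1,0]} : Set (Fin 3 → ℤ)) + ({![0,0,0], ![1,0,0]} : Set (Fin 3 → ℤ)) =
      ({![0,0,1], ![1,1,0], ![1,0,1], ![2,1,0]} : Set (Fin 3 → ℤ)) := by
    ext z
    simp only [Set.mem_add, Set.mem_insert_iff, Set.mem_singleton_iff]
    constructor
    · rintro ⟨x, (rfl | rfl), y, (rfl | rfl), rfl⟩ <;> decide
    · rintro (rfl | rfl | rfl | rfl)
      · exact ⟨![0,0,1], Or.inl rfl, ![0,0,0], Or.inl rfl, by decide⟩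
      · exact ⟨![1,1,0], Or.inr rfl, ![0,0,0], Or.inl rfl, by decide⟩
      · exact ⟨![0,0,1], Or.inl rfl, ![1,0,0], Or.inr rfl, by decide⟩
      · exact ⟨![1,1,0], Or.inr rfl, ![1,0,0], Or.inr rfl, by decide⟩
  have hmu : midUp (![0,0,1] : Fin 3 → ℤ) ![2,1,0] = ![1,1,1] := by
    funext i
    fin_cases i <;> simp [midUp] <;> norm_num [Int.ceil_eq_iff]
  have hmd : midDown (![0,0,1] : Fin 3 → ℤ) ![2,1,0] = ![1,0,0] := by
    funext i
    fin_cases i <;> simp [midDown] <;> norm_num [Int.floor_eq_iff]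
  have hnm1 : (![1,1,1] : Fin 3 → ℤ) ∉
      (({![0,0,1], ![1,1,0]} : Set (Fin 3 → ℤ)) + ({![0,0,0], ![1,0,0]} : Set (Fin 3 → ℤ))) := by
    rw [hsum]
    rintro (h | h | h | h) <;> exact absurd h (by decide)
  have hnm2 : (![1,0,0] : Fin 3 → ℤ) ∉
      (({![0,0,1], ![1,1,0]} : Set (Fin 3 → ℤ)) + ({![0,0,0], ![1,0,0]} : Set (Fin 3 → ℤ))) := by
    rw [hsum]
    rintro (h | h | h | h) <;> exact absurd h (by decide)
  refine ⟨?_, ?_, hsum, by decide, ⟨0, by decide⟩, hmu, hmd, hnm1, hnm2, ?_⟩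
  · -- S is DMC (vacuously)
    rintro x (rfl | rfl) y (rfl | rfl) ⟨i, hi⟩ <;> revert hi <;> fin_cases i <;> decide
  · -- B is an integer interval
    refine ⟨fun _ => (((0 : ℤ) : ℝ) : EReal),
      ![(((1 : ℤ) : ℝ) : EReal), (((0 : ℤ) : ℝ) : EReal), (((0 : ℤ) : ℝ) : EReal)],
      fun i => Or.inr ⟨0, rfl⟩, fun i => by fin_cases i <;> exact Or.inr ⟨_, rfl⟩,
      fun i => by fin_cases i <;> simp [hcast], ?_⟩
    ext x
    simp only [Set.mem_insert_iff, Set.mem_singleton_iff, Set.mem_setOf_eq]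
    constructor
    · rintro (rfl | rfl) <;> intro i <;> fin_cases i <;>
        simp only [Matrix.cons_val_zero, Matrix.cons_val_one, Matrix.head_cons,
          Matrix.cons_val_two, Matrix.tail_cons] <;>
        constructor <;> exact (hcast _ _).mpr (by decide)
    · intro h
      have h0l : (0 : ℤ) ≤ x 0 := (hcast 0 (x 0)).mp (h 0).1
      have h0u : x 0 ≤ 1 := by
        have := (h 0).2
        simp only [Matrix.cons_val_zero] at this
        exact (hcast (x 0) 1).mp this
      have h1l : (0 : ℤ) ≤ x 1 := (hcast 0 (x 1)).mp (h 1).1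
      have h1u : x 1 ≤ 0 := by
        have := (h 1).2
        simp only [Matrix.cons_val_one, Matrix.head_cons] at this
        exact (hcast (x 1) 0).mp this
      have h2l : (0 : ℤ) ≤ x 2 := (hcast 0 (x 2)).mp (h 2).1
      have h2u : x 2 ≤ 0 := by
        have := (h 2).2
        simp only [Matrix.cons_val_two, Matrix.tail_cons, Matrix.head_cons] at this
        exact (hcast (x 2) 0).mp this
      rcases eq_or_lt_of_le h0l with h0 | h0
      · left
        funext i
        fin_cases i <;> simp <;> omega
      · right
        funext i
        fin_cases i <;> simp <;> omega
  · -- S + B not DMC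
    intro hdmc
    have hx : (![0,0,1] : Fin 3 → ℤ) ∈
        (({![0,0,1], ![1,1,0]} : Set (Fin 3 → ℤ)) + ({![0,0,0], ![1,0,0]} : Set (Fin 3 → ℤ))) := by
      rw [hsum]; exact Or.inl rfl
    have hy : (![2,1,0] : Fin 3 → ℤ) ∈
        (({![0,0,1], ![1,1,0]} : Set (Fin 3 → ℤ)) + ({![0,0,0], ![1,0,0]} : Set (Fin 3 → ℤ))) := by
      rw [hsum]; exact Or.inr (Or.inr (Or.inr rfl))
    obtain ⟨h1, _⟩ := hdmc _ hx _ hy ⟨0, by decide⟩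
    rw [hmu] at h1
    exact hnm1 h1
end
end

section
/- Let S = {(0,0,1), (1,1,0)} ⊆ ℤ³, B = {(0,0,0), (1,0,0)}, and define f : ℤ³ → ℝ ∪ {+∞} by f(x) = 0 for x ∈ S, f(x) = 1 for x in the box [(0,0,0), (1,1,1)] ∩ ℤ³ but not in S, and f(x) = +∞ otherwise; let φ = δ_B be the indicator function of B (0 on B, +∞ off B), which is separable convex. Then the convolution g = f □ φ satisfies: for x = (0,0,1) and y = (2,1,0), ‖x − y‖∞ = 2, g(x) = g(y) = 0, and g(⌈(x+y)/2⌉) = g(⌊(x+y)/2⌋) = 1; hence g(x) + g(y) < g(⌈(x+y)/2⌉) + g(⌊(x+y)/2⌋), so g is neither globally nor locally discrete midpoint convex. -/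
open scoped BigOperators

noncomputable section

variable {ι : Type*} [Fintype ι]

/-!
Because `φ = δ_B` with `B = {0, e₀}` and `f` never takes the value `⊥`, the convolution is
`g x = min (f x) (f (x - e₀))`. Hence `g` vanishes on `S ∪ (S + e₀)`, which contains `(0,0,1)`
and `(2,1,0)`, while both midpoints `(1,1,1)`, `(1,0,0)` and their translates `(0,1,1)`,
`(0,0,0)` lie in the unit box but outside `S`, where `f = 1`. The indicator of `B` is separable
convex because `B` is the box `[0, e₀]`.
-/

theorem sInf_add_indicator_eq_iInf_sub {α : Type*} [AddCommGroup α] (f φ : α → EReal)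
    (B : Set α) (hf : ∀ y, f y ≠ ⊥) (hB : ∀ z ∈ B, φ z = 0) (hBc : ∀ z ∉ B, φ z = ⊤) (x : α) :
    sInf {v | ∃ y z, x = y + z ∧ v = f y + φ z} = ⨅ b ∈ B, f (x - b) := by
  refine le_antisymm (le_iInf₂ fun b hb => sInf_le ⟨x - b, b, (sub_add_cancel x b).symm, ?_⟩)
    (le_sInf ?_)
  · rw [hB b hb, add_zero]
  · rintro v ⟨y, z, rfl, rfl⟩
    by_cases hz : z ∈ B
    · rw [hB z hz, add_zero]
      exact iInf₂_le_of_le z hz (by rw [add_sub_cancel_right])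
    · rw [hBc z hz, EReal.add_top_of_ne_bot (hf y)]
      exact le_top

theorem EReal.sum_ite_zero_top {β : Type*} (s : Finset β) (p : β → Prop) [DecidablePred p] :
    ∑ i ∈ s, (if p i then (0 : EReal) else ⊤) = if ∀ i ∈ s, p i then 0 else ⊤ := by
  by_cases h : ∀ i ∈ s, p i
  · rw [if_pos h]
    exact Finset.sum_eq_zero fun i hi => if_pos (h i hi)
  · rw [if_neg h]
    push Not at h
    obtain ⟨i, hi, hpi⟩ := h
    refine top_le_iff.1 ?_
    calc (⊤ : EReal) = if p i then 0 else ⊤ := (if_neg hpi).symm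
      _ ≤ _ := Finset.single_le_sum (fun j _ => ite_nonneg le_rfl le_top) hi

theorem EReal.ite_zero_top_ne_bot (p : Prop) [Decidable p] :
    (if p then (0 : EReal) else ⊤) ≠ ⊥ := by
  split_ifs <;> simp

theorem separableConvex_of_eq_box_indicator (φ : (ι → ℤ) → EReal) (l u : ι → ℤ)
    (hφ : ∀ x, φ x = if ∀ i, l i ≤ x i ∧ x i ≤ u i then 0 else ⊤) : SeparableConvex φ := by
  classical
  refine ⟨fun i t => if l i ≤ t ∧ t ≤ u i then 0 else ⊤, fun i t => EReal.ite_zero_top_ne_bot _,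
    fun i t => ?_, fun x => ?_⟩
  · dsimp only
    by_cases hlo : l i ≤ t - 1 ∧ t - 1 ≤ u i
    · by_cases hhi : l i ≤ t + 1 ∧ t + 1 ≤ u i
      · rw [if_pos hlo, if_pos hhi, if_pos (by omega : l i ≤ t ∧ t ≤ u i)]
        simp
      · rw [if_neg hhi, EReal.add_top_of_ne_bot (EReal.ite_zero_top_ne_bot _)]
        exact le_top
    · rw [if_neg hlo, EReal.top_add_of_ne_bot (EReal.ite_zero_top_ne_bot _)]
      exact le_top
  · simp only [hφ, EReal.sum_ite_zero_top, Finset.mem_univ, true_implies]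

theorem not_globallyDMC_of_lt {κ : Type*} {f : (κ → ℤ) → EReal} {x y : κ → ℤ}
    (hxy : ∃ i, 2 ≤ |x i - y i|) (h : f x + f y < f (midUp x y) + f (midDown x y)) :
    ¬ GloballyDMC f :=
  fun hf => (hf x y hxy).not_gt h

theorem not_locallyDMC_of_lt {κ : Type*} {f : (κ → ℤ) → EReal} {x y : κ → ℤ}
    (hle : ∀ i, |x i - y i| ≤ 2) (heq : ∃ i, |x i - y i| = 2)
    (h : f x + f y < f (midUp x y) + f (midDown x y)) : ¬ LocallyDMC f :=
  fun hf => (hf.2 x y hle heq).not_gt h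

theorem mem_pair_iff_box (x : Fin 3 → ℤ) :
    x ∈ ({![0,0,0], ![1,0,0]} : Set (Fin 3 → ℤ)) ↔ ∀ i, 0 ≤ x i ∧ x i ≤ ![1,0,0] i := by
  constructor
  · rintro (rfl | rfl) <;> decide
  · intro h
    have h0 := h 0
    have h1 := h 1
    have h2 := h 2
    simp only [Fin.isValue, Nat.succ_eq_add_one, Nat.reduceAdd, Matrix.cons_val_zero,
      Matrix.cons_val_one, Matrix.cons_val] at h0 h1 h2
    rcases (by omega : x 0 = 0 ∨ x 0 = 1) with hx | hx
    · left; ext i; fin_cases i <;> simp <;> omega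
    · right; ext i; fin_cases i <;> simp <;> omega

theorem separableConvex_of_indicator_pair (φ : (Fin 3 → ℤ) → EReal)
    (hφB : ∀ x ∈ ({![0,0,0], ![1,0,0]} : Set (Fin 3 → ℤ)), φ x = 0)
    (hφout : ∀ x : Fin 3 → ℤ, x ∉ ({![0,0,0], ![1,0,0]} : Set (Fin 3 → ℤ)) → φ x = ⊤) :
    SeparableConvex φ :=
  separableConvex_of_eq_box_indicator φ 0 ![1,0,0] fun x => by
    split_ifs with h
    exacts [hφB x ((mem_pair_iff_box x).2 h), hφout x (mt (mem_pair_iff_box x).1 h)]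

/-- the convolution of the (locally and globally) discrete
midpoint convex function `f` with the separable convex indicator `φ = δ_B`
violates discrete midpoint convexity at `x = (0,0,1)`, `y = (2,1,0)`. -/
theorem convolution_dmc_counterexample
    (f φ g : (Fin 3 → ℤ) → EReal)
    (hfS : ∀ x ∈ ({![0,0,1], ![1,1,0]} : Set (Fin 3 → ℤ)), f x = 0)
    (hfbox : ∀ x : Fin 3 → ℤ, x ∉ ({![0,0,1], ![1,1,0]} : Set (Fin 3 → ℤ)) →
      (∀ i, 0 ≤ x i ∧ x i ≤ 1) → f x = 1)
    (hfout : ∀ x : Fin 3 → ℤ, ¬ (∀ i, 0 ≤ x i ∧ x i ≤ 1) → f x = ⊤)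
    (hφB : ∀ x ∈ ({![0,0,0], ![1,0,0]} : Set (Fin 3 → ℤ)), φ x = 0)
    (hφout : ∀ x : Fin 3 → ℤ, x ∉ ({![0,0,0], ![1,0,0]} : Set (Fin 3 → ℤ)) → φ x = ⊤)
    (hg : ∀ x, g x = sInf {v : EReal | ∃ y z : Fin 3 → ℤ, x = y + z ∧ v = f y + φ z}) :
    SeparableConvex φ ∧
    (∀ i, |(![0,0,1] : Fin 3 → ℤ) i - (![2,1,0] : Fin 3 → ℤ) i| ≤ 2) ∧
    (∃ i, |(![0,0,1] : Fin 3 → ℤ) i - (![2,1,0] : Fin 3 → ℤ) i| = 2) ∧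
    g ![0,0,1] = 0 ∧ g ![2,1,0] = 0 ∧
    midUp (![0,0,1] : Fin 3 → ℤ) ![2,1,0] = ![1,1,1] ∧
    midDown (![0,0,1] : Fin 3 → ℤ) ![2,1,0] = ![1,0,0] ∧
    g ![1,1,1] = 1 ∧ g ![1,0,0] = 1 ∧
    g ![0,0,1] + g ![2,1,0] <
      g (midUp (![0,0,1] : Fin 3 → ℤ) ![2,1,0]) +
        g (midDown (![0,0,1] : Fin 3 → ℤ) ![2,1,0]) ∧
    ¬ GloballyDMC g ∧ ¬ LocallyDMC g := by
  have hf_ne_bot : ∀ y, f y ≠ ⊥ := by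
    intro y
    by_cases hS : y ∈ ({![0,0,1], ![1,1,0]} : Set (Fin 3 → ℤ))
    · rw [hfS y hS]; exact EReal.zero_ne_bot
    by_cases hbox : ∀ i, 0 ≤ y i ∧ y i ≤ 1
    · rw [hfbox y hS hbox]; exact EReal.coe_ne_bot 1
    · rw [hfout y hbox]; exact top_ne_bot
  have hg_min : ∀ x x', x = x' + ![1,0,0] → g x = min (f x) (f x') := by
    rintro x x' rfl
    rw [hg, sInf_add_indicator_eq_iInf_sub f φ _ hf_ne_bot hφB hφout, iInf_pair,
      (by decide : (![0,0,0] : Fin 3 → ℤ) = 0), sub_zero, add_sub_cancel_right]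
  have hmu : midUp (![0,0,1] : Fin 3 → ℤ) ![2,1,0] = ![1,1,1] := by
    funext i; fin_cases i <;> norm_num [midUp, Int.ceil_eq_iff]
  have hmd : midDown (![0,0,1] : Fin 3 → ℤ) ![2,1,0] = ![1,0,0] := by
    funext i; fin_cases i <;> norm_num [midDown, Int.floor_eq_iff]
  have hg001 : g ![0,0,1] = 0 := by
    rw [hg_min _ ![-1,0,1] (by decide), hfS _ (by simp), hfout _ (by decide), min_top_right]
  have hg210 : g ![2,1,0] = 0 := by
    rw [hg_min _ ![1,1,0] (by decide), hfout _ (by decide), hfS _ (by simp), min_top_left]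
  have hg111 : g ![1,1,1] = 1 := by
    rw [hg_min _ ![0,1,1] (by decide), hfbox _ (by simp) (by decide), hfbox _ (by simp) (by decide),
      min_self]
  have hg100 : g ![1,0,0] = 1 := by
    rw [hg_min _ ![0,0,0] (by decide), hfbox _ (by simp) (by decide), hfbox _ (by simp) (by decide),
      min_self]
  have hlt : g ![0,0,1] + g ![2,1,0] <
      g (midUp (![0,0,1] : Fin 3 → ℤ) ![2,1,0]) + g (midDown (![0,0,1] : Fin 3 → ℤ) ![2,1,0]) := by
    rw [hmu, hmd, hg001, hg210, hg111, hg100]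
    norm_num
  have hle : ∀ i, |(![0,0,1] : Fin 3 → ℤ) i - (![2,1,0] : Fin 3 → ℤ) i| ≤ 2 := by decide
  have heq : ∃ i, |(![0,0,1] : Fin 3 → ℤ) i - (![2,1,0] : Fin 3 → ℤ) i| = 2 := ⟨0, by decide⟩
  exact ⟨separableConvex_of_indicator_pair φ hφB hφout, hle, heq, hg001, hg210, hmu, hmd, hg111,
    hg100, hlt, not_globallyDMC_of_lt (heq.imp fun _ h => h.ge) hlt,
    not_locallyDMC_of_lt hle heq hlt⟩
end
end

section
/- Let S ⊆ ℤ^n be a nonempty integrally convex set. Then the ℓ₁-distance function d⁽¹⁾ : ℤ^n → ℝ defined by d⁽¹⁾(x) = inf { ‖x − y‖₁ : y ∈ S } is an integrally convex function. -/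
open scoped BigOperators

/-!
The local convex extension of `d` is the ℓ₁-distance `E` to the convex hull of `S`, a convex
function. `E ≤ d̃` is Jensen's inequality, since `E ≤ d` at integer points. Conversely, for `q` in
the hull, integral convexity writes `q = ∑ λₖ yₖ` with `yₖ ∈ S ∩ N(q)`. Round every coordinate of
every `yₖ` independently to `⌊xᵢ⌋` or `⌊xᵢ⌋ + 1`, coupling it comonotonically with the two-valued
coordinate `yₖᵢ`: this yields a convex combination of points of `N(x)` with mean `x` whose
expected ℓ₁-displacement from the `yₖ` is exactly `‖x - q‖₁`. As `d` is 1-Lipschitz for `‖·‖₁`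
and vanishes on `S`, this gives `d̃(x) ≤ ‖x - q‖₁`.
-/

noncomputable section

open Finset

variable {ι : Type*}

@[norm_cast]
lemma EReal.coe_finsetSum {α : Type*} (s : Finset α) (f : α → ℝ) :
    ((∑ a ∈ s, f a : ℝ) : EReal) = ∑ a ∈ s, (f a : EReal) :=
  map_sum (⟨⟨Real.toEReal, EReal.coe_zero⟩, EReal.coe_add⟩ : ℝ →+ EReal) f s

lemma localConvexExt_le_sum_s16 {κ : Type*} [Fintype κ] (f : (ι → ℤ) → ℝ) {x : ι → ℝ}
    (w : κ → ℝ) (z : κ → ι → ℤ) (hw₀ : ∀ k, 0 ≤ w k) (hw₁ : ∑ k, w k = 1)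
    (hx : ∀ i, ∑ k, w k * z k i = x i) (hz : ∀ k, w k ≠ 0 → z k ∈ IntNbhd x) :
    LocalConvexExt (fun z => (f z : EReal)) x ≤ ((∑ k, w k * f (z k) : ℝ) : EReal) := by
  classical
  set s := univ.filter (w · ≠ 0)
  set lam : (ι → ℤ) → ℝ := fun v => ∑ k ∈ s with z k = v, w k
  have hsum : ∀ F : (ι → ℤ) → ℝ, ∑ v ∈ s.image z, lam v * F v = ∑ k, w k * F (z k) := by
    intro F
    rw [sum_image' (fun k => w k * F (z k)) fun k _ => by
      simp only [lam, sum_mul]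
      exact sum_congr rfl fun j hj => by rw [(mem_filter.1 hj).2]]
    exact sum_filter_of_ne fun k _ h => left_ne_zero_of_mul h
  refine sInf_le ⟨s.image z, lam, ?_, fun v _ => sum_nonneg fun k _ => hw₀ k, ?_, ?_, ?_⟩
  · simp only [mem_image, s, mem_filter, mem_univ, true_and]
    rintro _ ⟨k, hk, rfl⟩
    exact hz k hk
  · simpa [hw₁] using hsum 1
  · exact fun i => (hsum fun v => (v i : ℝ)).trans (hx i)
  · rw [← hsum f]
    push_cast
    rfl

lemma coe_le_localConvexExt {f : (ι → ℤ) → ℝ} {g : (ι → ℝ) → ℝ} (hg : ConvexOn ℝ Set.univ g)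
    (hgf : ∀ z, g (embedZ z) ≤ f z) (x : ι → ℝ) :
    (g x : EReal) ≤ LocalConvexExt (fun z => (f z : EReal)) x := by
  refine le_sInf ?_
  rintro _ ⟨A, lam, -, hlam₀, hlam₁, hx, rfl⟩
  have hxA : ∑ z ∈ A, lam z • embedZ z = x := funext fun i => by
    simpa [embedZ] using hx i
  simp only [← EReal.coe_mul, ← EReal.coe_finsetSum, EReal.coe_le_coe_iff]
  calc g x ≤ ∑ z ∈ A, lam z • g (embedZ z) :=
        hxA ▸ hg.map_sum_le hlam₀ hlam₁ fun _ _ => Set.mem_univ _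
    _ ≤ ∑ z ∈ A, lam z * f z :=
        sum_le_sum fun z hz => mul_le_mul_of_nonneg_left (hgf z) (hlam₀ z hz)

section ProductKernel

variable {β R : Type*} [Fintype ι] [DecidableEq ι] [Fintype β] [CommSemiring R]
  {K : ι → β → R}

lemma sum_prod_eq_one (hK : ∀ i, ∑ b, K i b = 1) : ∑ ε : ι → β, ∏ i, K i (ε i) = 1 := by
  rw [← Fintype.prod_sum]
  exact Fintype.prod_eq_one _ hK

lemma sum_prod_mul_apply (hK : ∀ i, ∑ b, K i b = 1) (j : ι) (G : β → R) :
    ∑ ε : ι → β, (∏ i, K i (ε i)) * G (ε j) = ∑ b, K j b * G b := by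
  have hprod (ε : ι → β) :
      (∏ i, K i (ε i)) * G (ε j) = ∏ i, K i (ε i) * if i = j then G (ε i) else 1 := by
    rw [prod_mul_distrib, Fintype.prod_ite_eq']
  simp_rw [hprod]
  rw [← Fintype.prod_sum fun i b => K i b * if i = j then G b else 1]
  rw [Fintype.prod_eq_single j fun i hi => by simp [hi, hK]]
  simp

end ProductKernel

section OneDimensionalCoupling

/- The coefficients are the masses that the comonotone coupling of Bernoulli(s) and Bernoulli(t)
puts on (0,0), (0,1), (1,0), (1,1); the displacements `|m + b' - b|` are the absolute values. -/
lemma comonotone_coupling_expected_abs (m : ℤ) {s t : ℝ} (hs₀ : 0 ≤ s) (hs₁ : s < 1) (ht₀ : 0 ≤ t)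
    (ht₁ : t < 1) :
    (1 - s - max (t - s) 0) * |(m : ℝ)| + max (t - s) 0 * |(m : ℝ) + 1|
      + (s - min s t) * |(m : ℝ) - 1| + min s t * |(m : ℝ)| = |m + t - s| := by
  have hαβ : max (t - s) 0 + min s t = t := by
    rcases le_total s t with h | h
    · rw [max_eq_left (by linarith), min_eq_left h]; ring
    · rw [max_eq_right (by linarith), min_eq_right h]; ring
  rcases lt_trichotomy m 0 with hm | rfl | hm
  · have hm' : (m : ℝ) ≤ -1 := by exact_mod_cast Int.le_sub_one_of_lt hm
    rw [abs_of_neg (by linarith), abs_of_nonpos (by linarith), abs_of_neg (by linarith),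
      abs_of_neg (by linarith)]
    linarith
  · rcases le_total s t with h | h
    · rw [max_eq_left (by linarith), min_eq_left h]
      simp [abs_of_nonneg (sub_nonneg.2 h)]
    · rw [max_eq_right (by linarith), min_eq_right h]
      simp [abs_of_nonpos (sub_nonpos.2 h)]
  · have hm' : (1 : ℝ) ≤ m := by exact_mod_cast hm
    rw [abs_of_pos (by linarith), abs_of_pos (by linarith), abs_of_nonneg (by linarith),
      abs_of_pos (by linarith)]
    linarith

lemma eq_floor_or_eq_floor_add_one_of_abs_sub_lt_one {p : ℝ} {v : ℤ} (h : |p - v| < 1) :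
    v = ⌊p⌋ ∨ v = ⌊p⌋ + 1 := by
  have h₁ : ⌊p⌋ - 1 < v := by
    have := Int.floor_le p
    have := (abs_lt.1 h).2
    exact_mod_cast (show ((⌊p⌋ - 1 : ℤ) : ℝ) < v by push_cast; linarith)
  have h₂ : v < ⌊p⌋ + 2 := by
    have := Int.lt_floor_add_one p
    have := (abs_lt.1 h).1
    exact_mod_cast (show (v : ℝ) < ((⌊p⌋ + 2 : ℤ) : ℝ) by push_cast; linarith)
  omega

variable {κ : Type*} [Fintype κ] {w : κ → ℝ} {u : κ → ℤ} {p : ℝ}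

lemma sum_mul_eq_of_abs_sub_lt_one (hw₁ : ∑ k, w k = 1) (hp : ∑ k, w k * u k = p)
    (hu : ∀ k, |p - u k| < 1) (F : ℤ → ℝ) :
    ∑ k, w k * F (u k) = (1 - Int.fract p) * F ⌊p⌋ + Int.fract p * F (⌊p⌋ + 1) := by
  have hF (k : κ) : F (u k) = F ⌊p⌋ + (u k - ⌊p⌋) * (F (⌊p⌋ + 1) - F ⌊p⌋) := by
    rcases eq_floor_or_eq_floor_add_one_of_abs_sub_lt_one (hu k) with h | h <;> simp [h]
  calc ∑ k, w k * F (u k)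
      = F ⌊p⌋ * ∑ k, w k + (F (⌊p⌋ + 1) - F ⌊p⌋) * (∑ k, w k * u k - ⌊p⌋ * ∑ k, w k) := by
        simp only [mul_sum, ← sum_sub_distrib, ← sum_add_distrib, hF]
        exact sum_congr rfl fun k _ => by ring
    _ = _ := by rw [hp, hw₁, ← Int.self_sub_floor]; ring

/-- Under the comonotone coupling of the laws on `{⌊p⌋, ⌊p⌋ + 1}` with mean `p` and on
`{⌊x⌋, ⌊x⌋ + 1}` with mean `x`, the probability that the second variable is `⌊x⌋ + 1` given
that the first one is `v`. -/
def roundUpProb (p x : ℝ) (v : ℤ) : ℝ :=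
  if v = ⌊p⌋ then max (Int.fract x - Int.fract p) 0 / (1 - Int.fract p)
  else min (Int.fract p) (Int.fract x) / Int.fract p

lemma roundUpProb_nonneg (p x : ℝ) (v : ℤ) : 0 ≤ roundUpProb p x v := by
  unfold roundUpProb
  split_ifs
  · exact div_nonneg (le_max_right _ _) (sub_nonneg.2 (Int.fract_lt_one p).le)
  · exact div_nonneg (le_min (Int.fract_nonneg p) (Int.fract_nonneg x)) (Int.fract_nonneg p)

lemma roundUpProb_le_one (p x : ℝ) (v : ℤ) : roundUpProb p x v ≤ 1 := by
  unfold roundUpProb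
  split_ifs
  · refine div_le_one_of_le₀ (max_le ?_ ?_) (sub_nonneg.2 (Int.fract_lt_one p).le)
    · linarith [Int.fract_lt_one x]
    · linarith [Int.fract_lt_one p]
  · exact div_le_one_of_le₀ (min_le_left _ _) (Int.fract_nonneg p)

lemma roundUpProb_of_fract_eq_zero {x : ℝ} (hx : Int.fract x = 0) (p : ℝ) (v : ℤ) :
    roundUpProb p x v = 0 := by
  simp [roundUpProb, hx, Int.fract_nonneg]

def roundProb (p x : ℝ) (v : ℤ) (b : Bool) : ℝ :=
  if b then roundUpProb p x v else 1 - roundUpProb p x v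

lemma roundProb_nonneg (p x : ℝ) (v : ℤ) (b : Bool) : 0 ≤ roundProb p x v b := by
  cases b
  · exact sub_nonneg.2 (roundUpProb_le_one p x v)
  · exact roundUpProb_nonneg p x v

@[simp]
lemma sum_roundProb (p x : ℝ) (v : ℤ) : ∑ b, roundProb p x v b = 1 := by
  simp [roundProb]

lemma one_sub_fract_mul_roundUpProb_floor (p x : ℝ) :
    (1 - Int.fract p) * roundUpProb p x ⌊p⌋ = max (Int.fract x - Int.fract p) 0 := by
  rw [roundUpProb, if_pos rfl, mul_div_cancel₀ _ (sub_ne_zero.2 (Int.fract_lt_one p).ne')]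

lemma fract_mul_roundUpProb_floor_add_one (p x : ℝ) :
    Int.fract p * roundUpProb p x (⌊p⌋ + 1) = min (Int.fract p) (Int.fract x) := by
  rw [roundUpProb, if_neg (by omega)]
  rcases (Int.fract_nonneg p).eq_or_lt with h | h
  · simp [← h, Int.fract_nonneg]
  · exact mul_div_cancel₀ _ h.ne'

lemma sum_mul_roundUpProb (hw₁ : ∑ k, w k = 1) (hp : ∑ k, w k * u k = p)
    (hu : ∀ k, |p - u k| < 1) (x : ℝ) :
    ∑ k, w k * roundUpProb p x (u k) = Int.fract x := by
  rw [sum_mul_eq_of_abs_sub_lt_one hw₁ hp hu, one_sub_fract_mul_roundUpProb_floor,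
    fract_mul_roundUpProb_floor_add_one]
  rcases le_total (Int.fract p) (Int.fract x) with h | h
  · rw [max_eq_left (by linarith), min_eq_left h]; ring
  · rw [max_eq_right (by linarith), min_eq_right h]; ring

def roundCost (p x : ℝ) (v : ℤ) : ℝ :=
  roundUpProb p x v * |((⌊x⌋ + 1 : ℤ) : ℝ) - v| + (1 - roundUpProb p x v) * |(⌊x⌋ : ℝ) - v|

lemma sum_mul_roundCost (hw₁ : ∑ k, w k = 1) (hp : ∑ k, w k * u k = p)
    (hu : ∀ k, |p - u k| < 1) (x : ℝ) : ∑ k, w k * roundCost p x (u k) = |x - p| := by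
  rw [sum_mul_eq_of_abs_sub_lt_one hw₁ hp hu, roundCost, roundCost]
  have hα := one_sub_fract_mul_roundUpProb_floor p x
  have hβ := fract_mul_roundUpProb_floor_add_one p x
  have hx : x - p = ((⌊x⌋ - ⌊p⌋ : ℤ) : ℝ) + Int.fract x - Int.fract p := by
    push_cast; rw [← Int.self_sub_floor, ← Int.self_sub_floor]; ring
  rw [hx, ← comonotone_coupling_expected_abs (⌊x⌋ - ⌊p⌋) (Int.fract_nonneg p) (Int.fract_lt_one p)
    (Int.fract_nonneg x) (Int.fract_lt_one x), ← hα, ← hβ]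
  push_cast
  ring_nf

end OneDimensionalCoupling

section RoundingKernel

variable [Fintype ι] (p x : ι → ℝ)

def roundKernel (v : ι → ℤ) (ε : ι → Bool) : ℝ :=
  ∏ i, roundProb (p i) (x i) (v i) (ε i)

def roundPoint (ε : ι → Bool) : ι → ℤ := fun i => if ε i then ⌊x i⌋ + 1 else ⌊x i⌋

variable {p x}

lemma roundKernel_nonneg (v : ι → ℤ) (ε : ι → Bool) : 0 ≤ roundKernel p x v ε :=
  prod_nonneg fun _ _ => roundProb_nonneg _ _ _ _

lemma sum_roundKernel [DecidableEq ι] (v : ι → ℤ) : ∑ ε, roundKernel p x v ε = 1 :=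
  sum_prod_eq_one (K := fun i => roundProb (p i) (x i) (v i)) fun _ => sum_roundProb _ _ _

lemma sum_roundKernel_mul [DecidableEq ι] (v : ι → ℤ) (i : ι) (G : ℤ → ℝ) :
    ∑ ε, roundKernel p x v ε * G (roundPoint x ε i)
      = roundUpProb (p i) (x i) (v i) * G (⌊x i⌋ + 1)
        + (1 - roundUpProb (p i) (x i) (v i)) * G ⌊x i⌋ := by
  refine (sum_prod_mul_apply (K := fun i => roundProb (p i) (x i) (v i))
    (fun _ => sum_roundProb _ _ _) i fun b => G (if b then ⌊x i⌋ + 1 else ⌊x i⌋)).trans ?_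
  simp [roundProb]

lemma sum_roundKernel_mul_sum_abs [DecidableEq ι] (v : ι → ℤ) :
    ∑ ε, roundKernel p x v ε * ∑ i, |(roundPoint x ε i : ℝ) - v i|
      = ∑ i, roundCost (p i) (x i) (v i) := by
  simp_rw [mul_sum]
  rw [sum_comm]
  exact sum_congr rfl fun i _ => sum_roundKernel_mul v i fun u => |(u : ℝ) - v i|

lemma roundPoint_mem_intNbhd {v : ι → ℤ} {ε : ι → Bool} (h : roundKernel p x v ε ≠ 0) :
    roundPoint x ε ∈ IntNbhd x := by
  intro i
  have hi := prod_ne_zero_iff.1 h i (mem_univ i)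
  cases hε : ε i
  · simp only [roundPoint, hε, Bool.false_eq_true, if_false]
    rw [Int.self_sub_floor, abs_of_nonneg (Int.fract_nonneg _)]
    exact Int.fract_lt_one _
  · have hfract : Int.fract (x i) ≠ 0 := fun h =>
      hi (by simp [hε, roundProb, roundUpProb_of_fract_eq_zero h])
    simp only [roundPoint, hε, if_true]
    push_cast
    rw [← sub_sub, Int.self_sub_floor, abs_of_neg (by linarith [Int.fract_lt_one (x i)])]
    linarith [(Int.fract_nonneg (x i)).lt_of_ne' hfract]

end RoundingKernel

theorem localConvexExt_le_sum_add_sum_abs [Fintype ι] {κ : Type*} [Fintype κ]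
    (f : (ι → ℤ) → ℝ) (hf : ∀ z y, f z ≤ f y + ∑ i, |(z i : ℝ) - y i|) {p : ι → ℝ}
    (w : κ → ℝ) (y : κ → ι → ℤ) (hw₀ : ∀ k, 0 ≤ w k) (hw₁ : ∑ k, w k = 1)
    (hp : ∀ i, ∑ k, w k * y k i = p i) (hy : ∀ k, y k ∈ IntNbhd p) (x : ι → ℝ) :
    LocalConvexExt (fun z => (f z : EReal)) x
      ≤ ((∑ k, w k * f (y k) + ∑ i, |x i - p i| : ℝ) : EReal) := by
  classical
  have hu (i : ι) (k : κ) : |p i - y k i| < 1 := hy k i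
  have hW₀ (m : κ × (ι → Bool)) : 0 ≤ w m.1 * roundKernel p x (y m.1) m.2 :=
    mul_nonneg (hw₀ _) (roundKernel_nonneg _ _)
  refine (localConvexExt_le_sum_s16 f (fun m : κ × (ι → Bool) => w m.1 * roundKernel p x (y m.1) m.2)
    (fun m => roundPoint x m.2) hW₀ ?_ ?_ ?_).trans ?_
  · simp_rw [Fintype.sum_prod_type, ← mul_sum, sum_roundKernel, mul_one, hw₁]
  · intro i
    simp_rw [Fintype.sum_prod_type, mul_assoc, ← mul_sum, sum_roundKernel_mul _ i Int.cast]
    calc _ = ⌊x i⌋ * ∑ k, w k + ∑ k, w k * roundUpProb (p i) (x i) (y k i) := by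
          rw [mul_sum, ← sum_add_distrib]
          push_cast
          exact sum_congr rfl fun k _ => by ring
      _ = x i := by rw [hw₁, sum_mul_roundUpProb hw₁ (hp i) (hu i), mul_one, Int.floor_add_fract]
  · exact fun m hm => roundPoint_mem_intNbhd (right_ne_zero_of_mul hm)
  · rw [EReal.coe_le_coe_iff]
    calc ∑ m : κ × (ι → Bool), w m.1 * roundKernel p x (y m.1) m.2 * f (roundPoint x m.2)
        ≤ ∑ m : κ × (ι → Bool), w m.1 * roundKernel p x (y m.1) m.2
            * (f (y m.1) + ∑ i, |(roundPoint x m.2 i : ℝ) - y m.1 i|) :=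
          sum_le_sum fun m _ => mul_le_mul_of_nonneg_left (hf _ _) (hW₀ m)
      _ = ∑ k, w k * (f (y k) + ∑ i, roundCost (p i) (x i) (y k i)) := by
          rw [Fintype.sum_prod_type]
          refine sum_congr rfl fun k _ => ?_
          simp_rw [mul_assoc, ← mul_sum, mul_add (roundKernel _ _ _ _)]
          rw [sum_add_distrib, ← sum_mul, sum_roundKernel, one_mul, sum_roundKernel_mul_sum_abs]
      _ = ∑ k, w k * f (y k) + ∑ i, |x i - p i| := by
          simp_rw [← sum_mul_roundCost hw₁ (hp _) (hu _), mul_add, sum_add_distrib, mul_sum]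
          rw [sum_comm (s := univ) (t := univ) (f := fun k i => w k * roundCost _ _ _)]

section L1Distance

variable [Fintype ι]

def l1InfDist (C : Set (ι → ℝ)) (x : ι → ℝ) : ℝ := ⨅ q : C, ∑ i, |x i - q.1 i|

lemma l1InfDist_le {C : Set (ι → ℝ)} {q : ι → ℝ} (hq : q ∈ C) (x : ι → ℝ) :
    l1InfDist C x ≤ ∑ i, |x i - q i| :=
  ciInf_le ⟨0, by rintro _ ⟨q, rfl⟩; exact sum_nonneg fun i _ => abs_nonneg _⟩ (⟨q, hq⟩ : C)

lemma convexOn_l1InfDist {C : Set (ι → ℝ)} (hC : Convex ℝ C) (hne : C.Nonempty) :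
    ConvexOn ℝ Set.univ (l1InfDist C) := by
  have : Nonempty C := hne.to_subtype
  refine ⟨convex_univ, fun x _ y _ a b ha hb hab => ?_⟩
  have key (p q : C) : l1InfDist C (a • x + b • y)
      ≤ a * ∑ i, |x i - p.1 i| + b * ∑ i, |y i - q.1 i| := by
    refine (l1InfDist_le (hC p.2 q.2 ha hb hab) _).trans ?_
    rw [mul_sum, mul_sum, ← sum_add_distrib]
    refine sum_le_sum fun i _ => ?_
    calc |(a • x + b • y) i - (a • p.1 + b • q.1) i| = |a * (x i - p.1 i) + b * (y i - q.1 i)| := by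
          simp only [Pi.add_apply, Pi.smul_apply, smul_eq_mul]; ring_nf
      _ ≤ |a * (x i - p.1 i)| + |b * (y i - q.1 i)| := abs_add_le _ _
      _ = a * |x i - p.1 i| + b * |y i - q.1 i| := by
          rw [abs_mul, abs_mul, abs_of_nonneg ha, abs_of_nonneg hb]
  have hx (q : C) : l1InfDist C (a • x + b • y) - b * ∑ i, |y i - q.1 i| ≤ a * l1InfDist C x :=
    calc _ ≤ ⨅ p : C, a * ∑ i, |x i - p.1 i| :=
          le_ciInf fun p => sub_le_iff_le_add.2 (key p q)
      _ = _ := (Real.mul_iInf_of_nonneg ha _).symm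
  have hy : l1InfDist C (a • x + b • y) - a * l1InfDist C x ≤ b * l1InfDist C y :=
    calc _ ≤ ⨅ q : C, b * ∑ i, |y i - q.1 i| :=
          le_ciInf fun q => by linarith [hx q]
      _ = _ := (Real.mul_iInf_of_nonneg hb _).symm
  simp only [smul_eq_mul]
  linarith

end L1Distance

section L1DistanceToLatticeSet

variable [Fintype ι] {S : Set (ι → ℤ)}

def l1DistToSet (S : Set (ι → ℤ)) (z : ι → ℤ) : ℝ := ⨅ y : S, ((∑ i, |z i - y.1 i| : ℤ) : ℝ)

lemma l1DistToSet_le {y : ι → ℤ} (hy : y ∈ S) (z : ι → ℤ) :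
    l1DistToSet S z ≤ ((∑ i, |z i - y i| : ℤ) : ℝ) :=
  ciInf_le ⟨0, by rintro _ ⟨y, rfl⟩; exact Int.cast_nonneg (sum_nonneg fun i _ => abs_nonneg _)⟩
    (⟨y, hy⟩ : S)

lemma exists_l1DistToSet_eq (hne : S.Nonempty) (z : ι → ℤ) :
    ∃ y ∈ S, l1DistToSet S z = ((∑ i, |z i - y i| : ℤ) : ℝ) := by
  have : Nonempty S := hne.to_subtype
  obtain ⟨_, ⟨y, hy, rfl⟩, hmin⟩ := Int.exists_least_of_bdd
    (P := fun r => ∃ y ∈ S, r = ∑ i, |z i - y i|)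
    ⟨0, by rintro _ ⟨y, -, rfl⟩; exact sum_nonneg fun i _ => abs_nonneg _⟩
    (hne.elim fun y hy => ⟨_, y, hy, rfl⟩)
  exact ⟨y, hy, le_antisymm (l1DistToSet_le hy z)
    (le_ciInf fun y' => by exact_mod_cast hmin _ ⟨y', y'.2, rfl⟩)⟩

lemma sInf_l1_eq_l1DistToSet (hne : S.Nonempty) (z : ι → ℤ) :
    sInf {v : EReal | ∃ y ∈ S, v = (((∑ i, |z i - y i| : ℤ) : ℝ) : EReal)}
      = (l1DistToSet S z : EReal) := by
  obtain ⟨y, hy, hyz⟩ := exists_l1DistToSet_eq hne z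
  refine IsGLB.sInf_eq (IsLeast.isGLB ⟨⟨y, hy, by rw [hyz]⟩, ?_⟩)
  rintro _ ⟨y', hy', rfl⟩
  exact EReal.coe_le_coe_iff.2 (l1DistToSet_le hy' z)

lemma l1DistToSet_le_add (hne : S.Nonempty) (z y : ι → ℤ) :
    l1DistToSet S z ≤ l1DistToSet S y + ∑ i, |(z i : ℝ) - y i| := by
  obtain ⟨y', hy', hyy'⟩ := exists_l1DistToSet_eq hne y
  have htri : ∑ i, |z i - y' i| ≤ ∑ i, |y i - y' i| + ∑ i, |z i - y i| := by
    rw [← sum_add_distrib]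
    exact sum_le_sum fun i _ => (abs_sub_le _ _ _).trans_eq (add_comm _ _)
  calc l1DistToSet S z ≤ ((∑ i, |z i - y' i| : ℤ) : ℝ) := l1DistToSet_le hy' z
    _ ≤ _ := by rw [hyy']; exact_mod_cast htri

lemma l1InfDist_convexHull_le_l1DistToSet (hne : S.Nonempty) (z : ι → ℤ) :
    l1InfDist (convexHull ℝ (embedZ '' S)) (embedZ z) ≤ l1DistToSet S z := by
  obtain ⟨y, hy, hzy⟩ := exists_l1DistToSet_eq hne z
  rw [hzy]
  push_cast
  exact l1InfDist_le (subset_convexHull ℝ _ (Set.mem_image_of_mem _ hy)) _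

lemma localConvexExt_l1DistToSet_le (hne : S.Nonempty) (hS : IntegrallyConvexSet S) {q : ι → ℝ}
    (hq : q ∈ convexHull ℝ (embedZ '' S)) (x : ι → ℝ) :
    LocalConvexExt (fun z => (l1DistToSet S z : EReal)) x ≤ ((∑ i, |x i - q i| : ℝ) : EReal) := by
  obtain ⟨κ, _, w, y, hw₀, hw₁, hy, hwy⟩ := mem_convexHull_iff_exists_fintype.1 (hS q hq)
  choose y' hy'S hy' using hy
  have hmean (i : ι) : ∑ k, w k * y' k i = q i := by
    simp [← hwy, ← hy', embedZ]
  refine (localConvexExt_le_sum_add_sum_abs _ (l1DistToSet_le_add hne) w y' hw₀ hw₁ hmean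
    (fun k => (hy'S k).2) x).trans (EReal.coe_le_coe_iff.2 ?_)
  have hS0 (k : κ) : w k * l1DistToSet S (y' k) ≤ 0 :=
    mul_nonpos_of_nonneg_of_nonpos (hw₀ k) (by simpa using l1DistToSet_le (hy'S k).1 (y' k))
  linarith [sum_nonpos (s := univ) fun k _ => hS0 k]

theorem localConvexExt_l1DistToSet (hne : S.Nonempty) (hS : IntegrallyConvexSet S)
    (x : ι → ℝ) : LocalConvexExt (fun z => (l1DistToSet S z : EReal)) x
      = (l1InfDist (convexHull ℝ (embedZ '' S)) x : EReal) := by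
  set C := convexHull ℝ (embedZ '' S)
  have hC : C.Nonempty := (hne.image _).convexHull
  have hlower : (l1InfDist C x : EReal) ≤ LocalConvexExt (fun z => (l1DistToSet S z : EReal)) x :=
    coe_le_localConvexExt (convexOn_l1InfDist (convex_convexHull ℝ _) hC)
      (l1InfDist_convexHull_le_l1DistToSet hne) x
  have hupper (q : C) := localConvexExt_l1DistToSet_le hne hS q.2 x
  have hne_bot := ne_bot_of_le_ne_bot (EReal.coe_ne_bot _) hlower
  have hne_top := ne_top_of_le_ne_top (EReal.coe_ne_top _) (hupper ⟨_, hC.some_mem⟩)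
  rw [← EReal.coe_toReal hne_top hne_bot] at hlower hupper ⊢
  have : Nonempty C := hC.to_subtype
  exact congrArg _ (le_antisymm (le_ciInf fun q => EReal.coe_le_coe_iff.1 (hupper q))
    (EReal.coe_le_coe_iff.1 hlower))

end L1DistanceToLatticeSet

end

/-- The ℓ₁-distance to a nonempty integrally convex set is an
integrally convex function. -/
theorem l1_distance_integrally_convex (n : ℕ)
    (S : Set (Fin n → ℤ)) (hne : S.Nonempty) (hS : IntegrallyConvexSet S)
    (d : (Fin n → ℤ) → EReal)
    (hd : ∀ x, d x = sInf {v : EReal |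
      ∃ y ∈ S, v = (((∑ i, |x i - y i| : ℤ) : ℝ) : EReal)}) :
    IntegrallyConvexFn d := by
  obtain rfl : d = fun z => (l1DistToSet S z : EReal) :=
    funext fun z => (hd z).trans (sInf_l1_eq_l1DistToSet hne z)
  intro x y a b ha hb hab
  have hconv := (convexOn_l1InfDist (convex_convexHull ℝ _) (hne.image embedZ).convexHull).2
    (Set.mem_univ x) (Set.mem_univ y) ha hb hab
  simp only [localConvexExt_l1DistToSet hne hS, smul_eq_mul] at hconv ⊢
  exact_mod_cast hconv
end
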